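/- arXiv:2007.11521 — 9 statements merged into one kernel-verified Lean document; each statement's English description precedes it below -/
import Mathlib

section
/- Let P and Q be probability measures on the real line with its Borel σ-field. The following four properties are equivalent: (i) there exist a σ-finite measure μ on ℝ and densities f = dP/dμ, g = dQ/dμ such that the ratio g/f is isotonic (non-decreasing) on the set {f + g > 0}; (ii) there exist a σ-finite measure μ and densities f = dP/dμ, g = dQ/dμ such that f(y)·g(x) ≤ f(x)·g(y) whenever x < y; (iii) for arbitrary Borel sets A, B ⊆ ℝ with A ≤ B element-wise (i.e. a ≤ b for all a ∈ A, b ∈ B), P(B)·Q(A) ≤ P(A)·Q(B); (iv) for all intervals A = (x,y] and B = (y,z] with x < y < z, P(B)·Q(A) ≤ P(A)·Q(B). -/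
open MeasureTheory Set Filter Metric
open scoped ENNReal Topology

/-!
Condition (iv) first extends to separated intervals `(a,b]`, `(c,d]`, by applying it to the
gap `(b,c]` and to `(a,b]`, `(b,d]`, and then to separated closed intervals by continuity from
above. By Besicovitch's differentiation theorem, `dQ/d(P+Q)` at `(P+Q)`-almost every `x` is the
limit of `Q B / (P+Q) B` over closed balls `B` centred at `x`, and for `x < y` and small radii the
separated-interval inequality orders these ratios. Hence `dQ/d(P+Q)` agrees a.e. with a monotone
`g`, and `1 - g`, `g` are densities of `P`, `Q` witnessing (i) and (ii). Conversely, (i) and (ii)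
give `f b * g a ≤ f a * g b` for almost all `a ≤ b`, and integrating over `A × B` yields (iii).
-/

lemma ENNReal.div_add_le_div_add {p q p' q' : ℝ≥0∞} (hpq : p + q ≠ ∞) (hpq'₀ : p' + q' ≠ 0)
    (hpq' : p' + q' ≠ ∞) (h : p' * q ≤ p * q') : q / (p + q) ≤ q' / (p' + q') := by
  rcases eq_or_ne (p + q) 0 with h0 | h0
  · simp [(add_eq_zero.mp h0).2]
  rw [ENNReal.div_le_iff h0 hpq, mul_comm, ← mul_div_assoc,
    ENNReal.le_div_iff_mul_le (Or.inl hpq'₀) (Or.inl hpq')]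
  calc q * (p' + q') = p' * q + q * q' := by ring
    _ ≤ p * q' + q * q' := by gcongr
    _ = (p + q) * q' := by ring

lemma ENNReal.mul_le_mul_of_div_le_div {a b c d : ℝ≥0∞} (ha : a ≠ ∞) (hc : c ≠ ∞) (hd : d ≠ ∞)
    (h : 0 < a + b → 0 < c + d → b / a ≤ d / c) : c * b ≤ a * d := by
  rcases eq_or_ne (a + b) 0 with hab | hab
  · simp [(add_eq_zero.mp hab).2]
  rcases eq_or_ne c 0 with hc0 | hc0
  · simp [hc0]
  have h := h (pos_iff_ne_zero.mpr hab) (by simp [pos_iff_ne_zero, hc0])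
  rcases eq_or_ne a 0 with ha0 | ha0
  · have hb0 : b ≠ 0 := by simpa [ha0] using hab
    simp [ha0, ENNReal.div_zero hb0, ENNReal.div_eq_top, hc0, hd] at h
  rw [ENNReal.div_le_iff ha0 ha] at h
  calc c * b ≤ c * (d / c * a) := by gcongr
    _ = a * d := by rw [← mul_assoc, ENNReal.mul_div_cancel hc0 hc, mul_comm]

lemma measure_Ioc_mul_measure_Ioc_le {P Q : Measure ℝ} [IsLocallyFiniteMeasure P]
    (hPQ : ∀ x y z : ℝ, x < y → y < z → P (Ioc y z) * Q (Ioc x y) ≤ P (Ioc x y) * Q (Ioc y z))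
    {a b c d : ℝ} (hab : a < b) (hbc : b ≤ c) (hcd : c < d) :
    P (Ioc c d) * Q (Ioc a b) ≤ P (Ioc a b) * Q (Ioc c d) := by
  rcases hbc.eq_or_lt with rfl | hbc
  · exact hPQ a b d hab hcd
  have hsplit : ∀ μ : Measure ℝ, μ (Ioc b d) = μ (Ioc b c) + μ (Ioc c d) := fun μ => by
    rw [← Ioc_union_Ioc_eq_Ioc hbc.le hcd.le,
      measure_union (Ioc_disjoint_Ioc_of_le le_rfl) measurableSet_Ioc]
  have hleft := hPQ a b d hab (hbc.trans hcd)
  have hright := hPQ b c d hbc hcd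
  rw [hsplit, hsplit] at hleft
  rcases eq_or_ne (P (Ioc b c) + P (Ioc c d)) 0 with h0 | h0
  · simp [(add_eq_zero.mp h0).2]
  rw [← ENNReal.mul_le_mul_iff_left h0 (by rw [← hsplit]; exact measure_Ioc_lt_top.ne)]
  calc P (Ioc c d) * Q (Ioc a b) * (P (Ioc b c) + P (Ioc c d))
      = P (Ioc c d) * ((P (Ioc b c) + P (Ioc c d)) * Q (Ioc a b)) := by ring
    _ ≤ P (Ioc c d) * (P (Ioc a b) * (Q (Ioc b c) + Q (Ioc c d))) := by gcongr
    _ = P (Ioc a b) * (P (Ioc c d) * Q (Ioc b c)) + P (Ioc a b) * P (Ioc c d) * Q (Ioc c d) := by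
      ring
    _ ≤ P (Ioc a b) * (P (Ioc b c) * Q (Ioc c d)) + P (Ioc a b) * P (Ioc c d) * Q (Ioc c d) := by
      gcongr
    _ = P (Ioc a b) * Q (Ioc c d) * (P (Ioc b c) + P (Ioc c d)) := by ring

lemma tendsto_measure_Ioc_nhdsGT (μ : Measure ℝ) [IsLocallyFiniteMeasure μ] (a b : ℝ) :
    Tendsto (fun t => μ (Ioc (a - t) b)) (𝓝[>] 0) (𝓝 (μ (Icc a b))) := by
  have hIcc : Icc a b = ⋂ t > 0, Ioc (a - t) b := by
    ext x
    simp only [mem_Icc, mem_iInter, mem_Ioc]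
    refine ⟨fun hx t ht => ⟨by linarith [hx.1], hx.2⟩, fun hx => ⟨?_, (hx 1 one_pos).2⟩⟩
    exact le_of_forall_pos_lt_add fun t ht => by linarith [(hx t ht).1]
  rw [hIcc]
  exact tendsto_measure_biInter_gt (fun _ _ => measurableSet_Ioc.nullMeasurableSet)
    (fun _ _ _ hst => Ioc_subset_Ioc_left (by linarith)) ⟨1, one_pos, measure_Ioc_lt_top.ne⟩

lemma measure_Icc_mul_measure_Icc_le {P Q : Measure ℝ}
    [IsLocallyFiniteMeasure P] [IsLocallyFiniteMeasure Q]
    (hPQ : ∀ x y z : ℝ, x < y → y < z → P (Ioc y z) * Q (Ioc x y) ≤ P (Ioc x y) * Q (Ioc y z))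
    {a b c d : ℝ} (hab : a ≤ b) (hbc : b < c) (hcd : c ≤ d) :
    P (Icc c d) * Q (Icc a b) ≤ P (Icc a b) * Q (Icc c d) := by
  refine le_of_tendsto_of_tendsto
    (ENNReal.Tendsto.mul (tendsto_measure_Ioc_nhdsGT P c d) (Or.inr measure_Icc_lt_top.ne)
      (tendsto_measure_Ioc_nhdsGT Q a b) (Or.inr measure_Icc_lt_top.ne))
    (ENNReal.Tendsto.mul (tendsto_measure_Ioc_nhdsGT P a b) (Or.inr measure_Icc_lt_top.ne)
      (tendsto_measure_Ioc_nhdsGT Q c d) (Or.inr measure_Icc_lt_top.ne)) ?_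
  filter_upwards [Ioo_mem_nhdsGT (sub_pos.mpr hbc)] with t ht
  exact measure_Ioc_mul_measure_Ioc_le hPQ (by linarith [ht.1]) (by linarith [ht.2])
    (by linarith [ht.1])

lemma exists_monotoneOn_rnDeriv_add {P Q : Measure ℝ} [IsFiniteMeasure P] [IsFiniteMeasure Q]
    (hPQ : ∀ x y z : ℝ, x < y → y < z → P (Ioc y z) * Q (Ioc x y) ≤ P (Ioc x y) * Q (Ioc y z)) :
    ∃ S : Set ℝ, (∀ᵐ x ∂(P + Q), x ∈ S) ∧ MonotoneOn (Q.rnDeriv (P + Q)) S := by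
  refine ⟨{x | Tendsto (fun r => Q (closedBall x r) / (P + Q) (closedBall x r)) (𝓝[>] 0)
      (𝓝 (Q.rnDeriv (P + Q) x)) ∧ x ∈ (P + Q).support}, ?_, ?_⟩
  · filter_upwards [Besicovitch.ae_tendsto_rnDeriv Q (P + Q), Measure.support_mem_ae]
      with x hx hsupp using ⟨hx, hsupp⟩
  rintro x ⟨hx, -⟩ y ⟨hy, hy_supp⟩ hxy
  rcases hxy.eq_or_lt with rfl | hlt
  · exact le_rfl
  refine le_of_tendsto_of_tendsto hx hy ?_
  filter_upwards [Ioo_mem_nhdsGT (half_pos (sub_pos.mpr hlt))] with r hr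
  have hy_pos : (P + Q) (closedBall y r) ≠ 0 :=
    ((Measure.mem_support_iff_forall y).mp hy_supp _ (closedBall_mem_nhds y hr.1)).ne'
  simp only [Measure.add_apply, Real.closedBall_eq_Icc] at hy_pos ⊢
  exact ENNReal.div_add_le_div_add (by finiteness) hy_pos (by finiteness)
    (measure_Icc_mul_measure_Icc_le hPQ (by linarith [hr.1]) (by linarith [hr.2])
      (by linarith [hr.1]))

lemma withDensity_one_sub_eq {α : Type*} [MeasurableSpace α] {P Q : Measure α}
    [IsFiniteMeasure Q] {g : α → ℝ≥0∞} (hg : Measurable g) (hg_le : g ≤ᵐ[P + Q] 1)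
    (hQ : Q = (P + Q).withDensity g) : P = (P + Q).withDensity (1 - g) := by
  have hsum : (P + Q).withDensity (1 - g) + Q = P + Q := by
    calc (P + Q).withDensity (1 - g) + Q
        = (P + Q).withDensity (1 - g) + (P + Q).withDensity g := by rw [← hQ]
      _ = (P + Q).withDensity 1 := by
        rw [← withDensity_add_left (measurable_one.sub hg)]
        refine withDensity_congr_ae ?_
        filter_upwards [hg_le] with x hx using tsub_add_cancel_of_le hx
      _ = P + Q := withDensity_one
  ext s hs
  have := congrArg (· s) hsum
  simp only [Measure.add_apply] at this
  exact (ENNReal.add_left_inj (measure_ne_top Q s)).mp this |>.symm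

lemma exists_monotone_withDensity_eq {P Q : Measure ℝ} [IsFiniteMeasure P] [IsFiniteMeasure Q]
    (hPQ : ∀ x y z : ℝ, x < y → y < z → P (Ioc y z) * Q (Ioc x y) ≤ P (Ioc x y) * Q (Ioc y z)) :
    ∃ g : ℝ → ℝ≥0∞, Monotone g ∧
      P = (P + Q).withDensity (1 - g) ∧ Q = (P + Q).withDensity g := by
  obtain ⟨S, hS, hmono⟩ := exists_monotoneOn_rnDeriv_add hPQ
  obtain ⟨g, hg, hgS⟩ :=
    hmono.exists_monotone_extension (OrderBot.bddBelow _) (OrderTop.bddAbove _)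
  have hg_ae : Q.rnDeriv (P + Q) =ᵐ[P + Q] g := by
    filter_upwards [hS] with x hx using hgS hx
  have hQ_le : Q ≤ P + Q := Measure.le_add_left le_rfl
  have hQ : Q = (P + Q).withDensity g := by
    rw [← withDensity_congr_ae hg_ae,
      Measure.withDensity_rnDeriv_eq _ _ (Measure.absolutelyContinuous_of_le hQ_le)]
  refine ⟨g, hg, withDensity_one_sub_eq hg.measurable ?_ hQ, hQ⟩
  filter_upwards [hg_ae, Measure.rnDeriv_le_one_of_le hQ_le] with x hx h1 using hx ▸ h1

lemma ae_lt_top_of_isFiniteMeasure_withDensity {α : Type*} [MeasurableSpace α] {μ : Measure α}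
    {f : α → ℝ≥0∞} (hf : Measurable f) [IsFiniteMeasure (μ.withDensity f)] :
    ∀ᵐ x ∂μ, f x < ∞ := by
  refine ae_lt_top hf ?_
  simpa [withDensity_apply _ MeasurableSet.univ] using measure_ne_top (μ.withDensity f) univ

lemma withDensity_mul_withDensity_le_of_ae {α : Type*} [MeasurableSpace α] [LE α]
    {μ : Measure α} {f g : α → ℝ≥0∞} (hf : Measurable f) (hg : Measurable g)
    (hfg : ∀ᵐ a ∂μ, ∀ᵐ b ∂μ, a ≤ b → f b * g a ≤ f a * g b)
    {A B : Set α} (hA : MeasurableSet A) (hB : MeasurableSet B)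
    (hAB : ∀ a ∈ A, ∀ b ∈ B, a ≤ b) :
    μ.withDensity f B * μ.withDensity g A ≤ μ.withDensity f A * μ.withDensity g B := by
  simp only [withDensity_apply _ hA, withDensity_apply _ hB]
  calc (∫⁻ b in B, f b ∂μ) * ∫⁻ a in A, g a ∂μ
      = ∫⁻ a in A, ∫⁻ b in B, f b * g a ∂μ ∂μ := by
        rw [← lintegral_const_mul _ hg]
        exact lintegral_congr fun a => (lintegral_mul_const _ hf).symm
    _ ≤ ∫⁻ a in A, ∫⁻ b in B, f a * g b ∂μ ∂μ := by
        refine lintegral_mono_ae ?_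
        filter_upwards [ae_restrict_of_ae hfg, ae_restrict_mem hA] with a ha haA
        refine lintegral_mono_ae ?_
        filter_upwards [ae_restrict_of_ae ha, ae_restrict_mem hB] with b hb hbB
        exact hb (hAB a haA b hbB)
    _ = (∫⁻ a in A, f a ∂μ) * ∫⁻ b in B, g b ∂μ := by
        rw [← lintegral_mul_const _ hf]
        exact lintegral_congr fun a => lintegral_const_mul _ hg

/-- **Proposition 1 (equivalent definitions of likelihood ratio order).**
For Borel probability measures `P`, `Q` on `ℝ`, the following are equivalent:
(i) there are a σ-finite dominating measure and densities whose ratio `g/f` is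
isotonic on `{f + g > 0}`; (ii) there are densities with
`f y * g x ≤ f x * g y` for `x < y`; (iii) `P B * Q A ≤ P A * Q B` for all
Borel sets `A ≤ B` elementwise; (iv) the same for adjacent intervals
`A = (x,y]`, `B = (y,z]`. -/
theorem stmt0 (P Q : Measure ℝ) [IsProbabilityMeasure P] [IsProbabilityMeasure Q] :
    List.TFAE
      [ ∃ μ : Measure ℝ, SigmaFinite μ ∧ ∃ f g : ℝ → ℝ≥0∞,
          Measurable f ∧ Measurable g ∧
          P = μ.withDensity f ∧ Q = μ.withDensity g ∧
          ∀ x y : ℝ, x ≤ y → 0 < f x + g x → 0 < f y + g y → g x / f x ≤ g y / f y,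
        ∃ μ : Measure ℝ, SigmaFinite μ ∧ ∃ f g : ℝ → ℝ≥0∞,
          Measurable f ∧ Measurable g ∧
          P = μ.withDensity f ∧ Q = μ.withDensity g ∧
          ∀ x y : ℝ, x < y → f y * g x ≤ f x * g y,
        ∀ A B : Set ℝ, MeasurableSet A → MeasurableSet B →
          (∀ a ∈ A, ∀ b ∈ B, a ≤ b) → P B * Q A ≤ P A * Q B,
        ∀ x y z : ℝ, x < y → y < z →
          P (Ioc y z) * Q (Ioc x y) ≤ P (Ioc x y) * Q (Ioc y z) ] := by
  tfae_have 1 → 3 := by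
    rintro ⟨μ, -, f, g, hf, hg, rfl, rfl, hfg⟩ A B hA hB hAB
    refine withDensity_mul_withDensity_le_of_ae hf hg ?_ hA hB hAB
    filter_upwards [ae_lt_top_of_isFiniteMeasure_withDensity hf] with a hfa
    filter_upwards [ae_lt_top_of_isFiniteMeasure_withDensity hf,
      ae_lt_top_of_isFiniteMeasure_withDensity hg] with b hfb hgb hab
    exact ENNReal.mul_le_mul_of_div_le_div hfa.ne hfb.ne hgb.ne (hfg a b hab)
  tfae_have 2 → 3 := by
    rintro ⟨μ, -, f, g, hf, hg, rfl, rfl, hfg⟩ A B hA hB hAB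
    refine withDensity_mul_withDensity_le_of_ae hf hg
      (.of_forall fun a => .of_forall fun b hab => ?_) hA hB hAB
    rcases hab.lt_or_eq with hab | rfl
    exacts [hfg a b hab, le_rfl]
  tfae_have 3 → 4 := fun h x y z _ _ =>
    h _ _ measurableSet_Ioc measurableSet_Ioc fun a ha b hb => ha.2.trans hb.1.le
  tfae_have 4 → 1 := by
    intro h
    obtain ⟨g, hg, hP, hQ⟩ := exists_monotone_withDensity_eq h
    exact ⟨P + Q, inferInstance, 1 - g, g, measurable_one.sub hg.measurable, hg.measurable, hP, hQ,
      fun x y hxy _ _ => ENNReal.div_le_div (hg hxy) (tsub_le_tsub_left (hg hxy) 1)⟩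
  tfae_have 4 → 2 := by
    intro h
    obtain ⟨g, hg, hP, hQ⟩ := exists_monotone_withDensity_eq h
    exact ⟨P + Q, inferInstance, 1 - g, g, measurable_one.sub hg.measurable, hg.measurable, hP, hQ,
      fun x y hxy => mul_le_mul' (tsub_le_tsub_left (hg hxy.le) 1) (hg hxy.le)⟩
  tfae_finish
end

section
/- Let (P_n)_n and (Q_n)_n be sequences of Borel probability measures on ℝ converging weakly to probability measures P and Q respectively. If P_n ≤lr Q_n for every n, then P ≤lr Q. -/
/-!
For finite measures, `μ ≤lr ν` is equivalent to the functional inequality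
`(∫ g dμ) (∫ f dν) ≤ (∫ f dμ) (∫ g dν)` for all nonnegative bounded continuous `f`, `g` whose
supports satisfy `supp f ≤ supp g`. One direction is the layer cake formula, which writes both
sides as double integrals of the set inequalities for superlevel sets. For the other, by inner
regularity and additivity it suffices to treat compact sets `K < L`; these are separated by a
gap, so thickened indicators of `K` and `L` are admissible test functions, and they converge
to the indicators. The functional inequality only involves integrals of bounded continuous
functions, hence defines a weakly closed set of pairs of probability measures.
-/

open MeasureTheory Set Filter
open scoped ENNReal

/-- `P` is smaller than `Q` in the likelihood ratio order. -/
def IsLR (P Q : Measure ℝ) : Prop :=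
  ∀ A B : Set ℝ, MeasurableSet A → MeasurableSet B →
    (∀ a ∈ A, ∀ b ∈ B, a ≤ b) → P B * Q A ≤ P A * Q B

open Metric Function Topology
open scoped NNReal BoundedContinuousFunction

theorem isLR_of_forall_lt {μ ν : Measure ℝ}
    (h : ∀ A B : Set ℝ, MeasurableSet A → MeasurableSet B →
      (∀ a ∈ A, ∀ b ∈ B, a < b) → μ B * ν A ≤ μ A * ν B) :
    IsLR μ ν := by
  intro A B hA hB hAB
  -- Splitting off the overlap `A ∩ B` leaves the strictly separated pairs `A \ B < B` and
  -- `A ∩ B < B \ A`; the overlap paired with itself contributes equally to both sides.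
  have h₁ : μ B * ν (A \ B) ≤ μ (A \ B) * ν B :=
    h _ _ (hA.diff hB) hB fun a ha b hb => (hAB a ha.1 b hb).lt_of_ne (by rintro rfl; exact ha.2 hb)
  have h₂ : μ (B \ A) * ν (A ∩ B) ≤ μ (A ∩ B) * ν (B \ A) :=
    h _ _ (hA.inter hB) (hB.diff hA) fun a ha b hb =>
      (hAB a ha.1 b hb.1).lt_of_ne (by rintro rfl; exact hb.2 ha.1)
  have hsplitA : ∀ ρ : Measure ℝ, ρ A = ρ (A \ B) + ρ (A ∩ B) :=
    fun ρ => (measure_sdiff_add_inter A hB).symm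
  have hsplitB : ∀ ρ : Measure ℝ, ρ B = ρ (A ∩ B) + ρ (B \ A) := fun ρ => by
    rw [inter_comm, measure_inter_add_sdiff B hA]
  calc μ B * ν A
      = μ B * ν (A \ B) + (μ (A ∩ B) * ν (A ∩ B) + μ (B \ A) * ν (A ∩ B)) := by
        rw [hsplitA ν, hsplitB μ]; ring
    _ ≤ μ (A \ B) * ν B + (μ (A ∩ B) * ν (A ∩ B) + μ (A ∩ B) * ν (B \ A)) := by gcongr
    _ = μ A * ν B := by rw [hsplitA μ, hsplitB ν]; ring

theorem isLR_of_isCompact {μ ν : Measure ℝ} [μ.InnerRegular] [ν.InnerRegular]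
    (h : ∀ K L : Set ℝ, IsCompact K → IsCompact L →
      (∀ a ∈ K, ∀ b ∈ L, a < b) → μ L * ν K ≤ μ K * ν L) :
    IsLR μ ν := by
  refine isLR_of_forall_lt fun A B hA hB hAB => ?_
  rw [hB.measure_eq_iSup_isCompact μ, hA.measure_eq_iSup_isCompact ν]
  simp only [ENNReal.iSup_mul, ENNReal.mul_iSup]
  refine iSup₂_le fun K hKA => iSup_le fun hK => iSup₂_le fun L hLB => iSup_le fun hL => ?_
  calc μ L * ν K ≤ μ K * ν L := h K L hK hL fun a ha b hb => hAB a (hKA ha) b (hLB hb)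
    _ ≤ μ A * ν B := by gcongr

theorem lintegral_coe_eq_lintegral_meas_lt {α : Type*} [MeasurableSpace α] (μ : Measure α)
    {f : α → ℝ≥0} (hf : Measurable f) :
    ∫⁻ x, (f x : ℝ≥0∞) ∂μ = ∫⁻ t in Ioi (0 : ℝ), μ {x | t < (f x : ℝ)} := by
  simpa only [ENNReal.ofReal_coe_nnreal] using lintegral_eq_lintegral_meas_lt μ
    (ae_of_all _ fun x => (f x).coe_nonneg) hf.coe_nnreal_real.aemeasurable

theorem IsLR.lintegral_mul_le {μ ν : Measure ℝ} (h : IsLR μ ν) {f g : ℝ → ℝ≥0}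
    (hf : Measurable f) (hg : Measurable g) (hfg : ∀ x ∈ support f, ∀ y ∈ support g, x ≤ y) :
    (∫⁻ x, g x ∂μ) * (∫⁻ x, f x ∂ν) ≤ (∫⁻ x, f x ∂μ) * (∫⁻ x, g x ∂ν) := by
  have hmeas : ∀ (ρ : Measure ℝ) (φ : ℝ → ℝ≥0), Measurable fun t : ℝ => ρ {x | t < φ x} :=
    fun ρ φ => Antitone.measurable fun s t hst => measure_mono fun x hx => hst.trans_lt hx
  have hsupp : ∀ {φ : ℝ → ℝ≥0} {t : ℝ}, 0 < t → {x | t < φ x} ⊆ support φ :=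
    fun ht x hx => (NNReal.coe_pos.1 (ht.trans hx)).ne'
  let F : ℝ → Set ℝ := fun t => {x | t < (f x : ℝ)}
  let G : ℝ → Set ℝ := fun s => {x | s < (g x : ℝ)}
  have hlevel : ∀ s ∈ Ioi (0 : ℝ), ∀ t ∈ Ioi (0 : ℝ), μ (G s) * ν (F t) ≤ μ (F t) * ν (G s) :=
    fun s hs t ht => h _ _ (measurableSet_lt measurable_const hf.coe_nnreal_real)
      (measurableSet_lt measurable_const hg.coe_nnreal_real)
      fun a ha b hb => hfg a (hsupp ht ha) b (hsupp hs hb)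
  simp only [lintegral_coe_eq_lintegral_meas_lt _ hf, lintegral_coe_eq_lintegral_meas_lt _ hg]
  calc (∫⁻ s in Ioi (0 : ℝ), μ (G s)) * (∫⁻ t in Ioi (0 : ℝ), ν (F t))
      = ∫⁻ s in Ioi (0 : ℝ), ∫⁻ t in Ioi (0 : ℝ), μ (G s) * ν (F t) :=
        (lintegral_lintegral_mul (hmeas μ g).aemeasurable (hmeas ν f).aemeasurable).symm
    _ ≤ ∫⁻ s in Ioi (0 : ℝ), ∫⁻ t in Ioi (0 : ℝ), ν (G s) * μ (F t) :=
        setLIntegral_mono' measurableSet_Ioi fun s hs => setLIntegral_mono' measurableSet_Ioi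
          fun t ht => (hlevel s hs t ht).trans_eq (mul_comm _ _)
    _ = (∫⁻ t in Ioi (0 : ℝ), μ (F t)) * (∫⁻ s in Ioi (0 : ℝ), ν (G s)) :=
        (lintegral_lintegral_mul (hmeas ν g).aemeasurable (hmeas μ f).aemeasurable).trans
          (mul_comm _ _)

theorem measure_mul_le_of_forall_lintegral_mul_le {μ ν : Measure ℝ}
    [IsFiniteMeasure μ] [IsFiniteMeasure ν]
    (h : ∀ f g : ℝ →ᵇ ℝ≥0, (∀ x ∈ support f, ∀ y ∈ support g, x ≤ y) →
      (∫⁻ x, g x ∂μ) * (∫⁻ x, f x ∂ν) ≤ (∫⁻ x, f x ∂μ) * (∫⁻ x, g x ∂ν))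
    {K L : Set ℝ} (hK : IsCompact K) (hL : IsCompact L) (hKL : ∀ a ∈ K, ∀ b ∈ L, a < b) :
    μ L * ν K ≤ μ K * ν L := by
  rcases K.eq_empty_or_nonempty with rfl | hK₀
  · simp
  rcases L.eq_empty_or_nonempty with rfl | hL₀
  · simp
  have hgap : sSup K < sInf L := hKL _ (hK.sSup_mem hK₀) _ (hL.sInf_mem hL₀)
  obtain ⟨δ, -, hδ, hδ_lim⟩ := exists_seq_strictAnti_tendsto' (half_pos (sub_pos.2 hgap))
  have hδ_pos : ∀ n, 0 < δ n := fun n => (hδ n).1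
  have hsupp : ∀ n, ∀ x ∈ support (thickenedIndicator (hδ_pos n) K),
      ∀ y ∈ support (thickenedIndicator (hδ_pos n) L), x ≤ y := by
    intro n x hx y hy
    obtain ⟨a, ha, hxa⟩ := mem_thickening_iff.1 (not_imp_comm.1 (thickenedIndicator_zero _ _) hx)
    obtain ⟨b, hb, hyb⟩ := mem_thickening_iff.1 (not_imp_comm.1 (thickenedIndicator_zero _ _) hy)
    rw [Real.dist_eq, abs_lt] at hxa hyb
    linarith [le_csSup hK.bddAbove ha, csInf_le hL.bddBelow hb, (hδ n).2]
  have hlim : ∀ (ρ ρ' : Measure ℝ) [IsFiniteMeasure ρ] [IsFiniteMeasure ρ'] {F G : Set ℝ},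
      IsClosed F → IsClosed G →
      Tendsto (fun n => (∫⁻ x, thickenedIndicator (hδ_pos n) F x ∂ρ) *
        ∫⁻ x, thickenedIndicator (hδ_pos n) G x ∂ρ') atTop (𝓝 (ρ F * ρ' G)) :=
    fun ρ ρ' _ _ F G hF hG => ENNReal.Tendsto.mul
      (tendsto_lintegral_thickenedIndicator_of_isClosed ρ hF hδ_pos hδ_lim)
      (Or.inr (measure_ne_top _ _))
      (tendsto_lintegral_thickenedIndicator_of_isClosed ρ' hG hδ_pos hδ_lim)
      (Or.inr (measure_ne_top _ _))
  exact le_of_tendsto_of_tendsto' (hlim μ ν hL.isClosed hK.isClosed)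
    (hlim μ ν hK.isClosed hL.isClosed) fun n => h _ _ (hsupp n)

theorem isLR_iff_forall_lintegral_mul_le {μ ν : Measure ℝ}
    [IsFiniteMeasure μ] [IsFiniteMeasure ν] :
    IsLR μ ν ↔ ∀ f g : ℝ →ᵇ ℝ≥0, (∀ x ∈ support f, ∀ y ∈ support g, x ≤ y) →
      (∫⁻ x, g x ∂μ) * (∫⁻ x, f x ∂ν) ≤ (∫⁻ x, f x ∂μ) * (∫⁻ x, g x ∂ν) :=
  ⟨fun h f g hfg => h.lintegral_mul_le f.continuous.measurable g.continuous.measurable hfg,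
    fun h => isLR_of_isCompact fun _ _ hK hL hKL =>
      measure_mul_le_of_forall_lintegral_mul_le h hK hL hKL⟩

theorem isClosed_setOf_isLR :
    IsClosed {p : ProbabilityMeasure ℝ × ProbabilityMeasure ℝ | IsLR p.1 p.2} := by
  have hS : {p : ProbabilityMeasure ℝ × ProbabilityMeasure ℝ | IsLR p.1 p.2} =
      ⋂ (f : ℝ →ᵇ ℝ≥0) (g : ℝ →ᵇ ℝ≥0) (_ : ∀ x ∈ support f, ∀ y ∈ support g, x ≤ y),
        {p | p.1.toFiniteMeasure.testAgainstNN g * p.2.toFiniteMeasure.testAgainstNN f ≤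
          p.1.toFiniteMeasure.testAgainstNN f * p.2.toFiniteMeasure.testAgainstNN g} := by
    ext p
    simp only [mem_ofPred_eq, mem_iInter, isLR_iff_forall_lintegral_mul_le, ← ENNReal.coe_le_coe,
      ENNReal.coe_mul, FiniteMeasure.testAgainstNN_coe_eq]
    rfl
  rw [hS]
  refine isClosed_iInter fun f => isClosed_iInter fun g => isClosed_iInter fun _ => ?_
  have hcont := ProbabilityMeasure.continuous_testAgainstNN_eval (Ω := ℝ)
  exact isClosed_le (((hcont g).comp continuous_fst).mul ((hcont f).comp continuous_snd))
    (((hcont f).comp continuous_fst).mul ((hcont g).comp continuous_snd))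

/-- **Likelihood ratio order is preserved under weak convergence.**
If `P n → Plim` and `Q n → Qlim` weakly and `P n ≤lr Q n` for all `n`,
then `Plim ≤lr Qlim`. -/
theorem stmt1 (P Q : ℕ → Measure ℝ) (Plim Qlim : Measure ℝ)
    [∀ n, IsProbabilityMeasure (P n)] [∀ n, IsProbabilityMeasure (Q n)]
    [IsProbabilityMeasure Plim] [IsProbabilityMeasure Qlim]
    (hPw : ∀ f : BoundedContinuousFunction ℝ ℝ,
      Tendsto (fun n => ∫ x, f x ∂(P n)) atTop (nhds (∫ x, f x ∂Plim)))
    (hQw : ∀ f : BoundedContinuousFunction ℝ ℝ,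
      Tendsto (fun n => ∫ x, f x ∂(Q n)) atTop (nhds (∫ x, f x ∂Qlim)))
    (hlr : ∀ n, IsLR (P n) (Q n)) :
    IsLR Plim Qlim := by
  have hP : Tendsto (β := ProbabilityMeasure ℝ) (fun n => ⟨P n, inferInstance⟩) atTop
      (𝓝 ⟨Plim, inferInstance⟩) :=
    ProbabilityMeasure.tendsto_iff_forall_integral_tendsto.2 hPw
  have hQ : Tendsto (β := ProbabilityMeasure ℝ) (fun n => ⟨Q n, inferInstance⟩) atTop
      (𝓝 ⟨Qlim, inferInstance⟩) :=
    ProbabilityMeasure.tendsto_iff_forall_integral_tendsto.2 hQw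
  exact isClosed_setOf_isLR.mem_of_tendsto (hP.prodMk_nhds hQ) (.of_forall hlr)
end

section
/- The relation ≤lr is a partial order on the set of all Borel probability measures on ℝ: for arbitrary probability measures P, Q, R on ℝ, (a) P ≤lr P; (b) if P ≤lr Q and Q ≤lr P then P = Q; (c) if P ≤lr Q and Q ≤lr R then P ≤lr R. -/
/-!
Testing `P ≤lr Q` on `A = Iic x`, `B = Ioi x` shows that the distribution function of `Q` lies
below that of `P`, so two measures that are `≤lr` each other have the same distribution function
and coincide. For transitivity, multiply the
inequalities for `(P, Q)` and `(Q, R)` on the same pair `A ≤ B` and cancel `Q A * Q B`. When this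
factor vanishes, split the line at `t = sSup A`: `Q` charges `Iic t` or `Ici t`, and testing
`P ≤lr Q` against `(Iic t, B)`, or `Q ≤lr R` against `(A, Ici t)`, forces `P B = 0` or `R A = 0`.
-/

open MeasureTheory Set
open scoped ENNReal

lemma exists_subset_Iic_subset_Ici {α : Type*} [ConditionallyCompleteLattice α] {A B : Set α}
    (hA : A.Nonempty) (hB : B.Nonempty) (hAB : ∀ a ∈ A, ∀ b ∈ B, a ≤ b) :
    ∃ t, A ⊆ Iic t ∧ B ⊆ Ici t := by
  obtain ⟨b, hb⟩ := hB
  exact ⟨sSup A, fun a ha => le_csSup ⟨b, fun a ha => hAB a ha b hb⟩ ha,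
    fun b hb => csSup_le hA fun a ha => hAB a ha b hb⟩

namespace IsLR

variable {P Q R : Measure ℝ} {A B : Set ℝ}

lemma refl (P : Measure ℝ) : IsLR P P :=
  fun _ _ _ _ _ => (mul_comm _ _).le

lemma measure_Iic_le [IsProbabilityMeasure P] [IsProbabilityMeasure Q] (h : IsLR P Q) (x : ℝ) :
    Q (Iic x) ≤ P (Iic x) := by
  have hx := h (Iic x) (Ioi x) measurableSet_Iic measurableSet_Ioi
    fun a ha b hb => (lt_of_le_of_lt ha hb).le
  have total (μ : Measure ℝ) [IsProbabilityMeasure μ] : μ (Iic x) + μ (Ioi x) = 1 := by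
    rw [← compl_Iic, prob_add_prob_compl measurableSet_Iic]
  calc Q (Iic x) = (P (Iic x) + P (Ioi x)) * Q (Iic x) := by rw [total P, one_mul]
    _ = P (Iic x) * Q (Iic x) + P (Ioi x) * Q (Iic x) := add_mul _ _ _
    _ ≤ P (Iic x) * Q (Iic x) + P (Iic x) * Q (Ioi x) := by gcongr
    _ = P (Iic x) := by rw [← mul_add, total Q, mul_one]

lemma antisymm [IsProbabilityMeasure P] [IsProbabilityMeasure Q] (hPQ : IsLR P Q)
    (hQP : IsLR Q P) : P = Q :=
  Measure.ext_of_Iic P Q fun x => (hQP.measure_Iic_le x).antisymm (hPQ.measure_Iic_le x)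

lemma measure_eq_zero_of_right (h : IsLR P Q) (hA : MeasurableSet A) (hB : MeasurableSet B)
    (hAB : ∀ a ∈ A, ∀ b ∈ B, a ≤ b) (hQA : Q A ≠ 0) (hQB : Q B = 0) : P B = 0 := by
  have := h A B hA hB hAB
  rw [hQB, mul_zero, nonpos_iff_eq_zero, mul_eq_zero] at this
  exact this.resolve_right hQA

lemma measure_eq_zero_of_left (h : IsLR Q R) (hA : MeasurableSet A) (hB : MeasurableSet B)
    (hAB : ∀ a ∈ A, ∀ b ∈ B, a ≤ b) (hQA : Q A = 0) (hQB : Q B ≠ 0) : R A = 0 := by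
  have := h A B hA hB hAB
  rw [hQA, zero_mul, nonpos_iff_eq_zero, mul_eq_zero] at this
  exact this.resolve_left hQB

lemma measure_eq_zero_or_measure_eq_zero [NeZero Q] (hPQ : IsLR P Q) (hQR : IsLR Q R)
    (hA : MeasurableSet A) (hB : MeasurableSet B) (hAB : ∀ a ∈ A, ∀ b ∈ B, a ≤ b)
    (hQA : Q A = 0) (hQB : Q B = 0) : P B = 0 ∨ R A = 0 := by
  obtain rfl | hAne := A.eq_empty_or_nonempty
  · exact .inr measure_empty
  obtain rfl | hBne := B.eq_empty_or_nonempty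
  · exact .inl measure_empty
  obtain ⟨t, hAt, hBt⟩ := exists_subset_Iic_subset_Ici hAne hBne hAB
  have hQt : Q (Iic t) ≠ 0 ∨ Q (Ici t) ≠ 0 := by
    by_contra! h
    apply NeZero.ne Q
    rw [← Measure.measure_univ_eq_zero, ← Iic_union_Ici (a := t)]
    exact measure_union_null h.1 h.2
  rcases hQt with hQt | hQt
  · exact .inl <| hPQ.measure_eq_zero_of_right measurableSet_Iic hB
      (fun a ha b hb => le_trans ha (hBt hb)) hQt hQB
  · exact .inr <| hQR.measure_eq_zero_of_left hA measurableSet_Ici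
      (fun a ha b hb => le_trans (hAt ha) hb) hQA hQt

lemma trans [IsFiniteMeasure Q] [NeZero Q] (hPQ : IsLR P Q) (hQR : IsLR Q R) : IsLR P R := by
  intro A B hA hB hAB
  by_cases hQA : Q A = 0 <;> by_cases hQB : Q B = 0
  · rcases hPQ.measure_eq_zero_or_measure_eq_zero hQR hA hB hAB hQA hQB with h | h <;> simp [h]
  · simp [hQR.measure_eq_zero_of_left hA hB hAB hQA hQB]
  · simp [hPQ.measure_eq_zero_of_right hA hB hAB hQA hQB]
  refine (ENNReal.mul_le_mul_iff_right (mul_ne_zero hQA hQB) (by finiteness)).1 ?_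
  calc Q A * Q B * (P B * R A) = P B * Q A * (Q B * R A) := by ring
    _ ≤ P A * Q B * (Q A * R B) := mul_le_mul' (hPQ A B hA hB hAB) (hQR A B hA hB hAB)
    _ = Q A * Q B * (P A * R B) := by ring

end IsLR

/-- **The likelihood ratio order is a partial order** on Borel probability
measures on `ℝ`: it is reflexive, antisymmetric and transitive. -/
theorem stmt4 :
    (∀ P : Measure ℝ, IsProbabilityMeasure P → IsLR P P) ∧
    (∀ P Q : Measure ℝ, IsProbabilityMeasure P → IsProbabilityMeasure Q →
      IsLR P Q → IsLR Q P → P = Q) ∧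
    (∀ P Q R : Measure ℝ, IsProbabilityMeasure P → IsProbabilityMeasure Q →
      IsProbabilityMeasure R → IsLR P Q → IsLR Q R → IsLR P R) :=
  ⟨fun P _ => IsLR.refl P, fun _ _ _ _ => IsLR.antisymm, fun _ _ _ _ _ _ => IsLR.trans⟩
end

section
/- Let P and Q be Borel probability measures on ℝ with distribution functions F and G, and suppose Q is absolutely continuous with respect to P. Then P ≤lr Q if and only if the ordinal dominance curve H(α) := G(F⁻¹(α)) is convex on the image Im(F) := {F(x) : x ∈ [−∞,∞]}, i.e. for all r < s < t in Im(F), (H(s)−H(r))/(s−r) ≤ (H(t)−H(s))/(t−s). -/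
open MeasureTheory Set
open scoped ENNReal

/-- The distribution function of `P`, extended to `[-∞,∞]`:
`F(x) = P({t : ℝ | t ≤ x})`, so `F(-∞) = 0` and `F(∞) = 1`. -/
noncomputable def distFunE (P : Measure ℝ) : EReal → ℝ :=
  fun x => (P {t : ℝ | (t : EReal) ≤ x}).toReal

/-- The quantile function `F⁻¹(α) = min {x ∈ [-∞,∞] : F(x) ≥ α}`. -/
noncomputable def quantE (P : Measure ℝ) (α : ℝ) : EReal :=
  sInf {x : EReal | α ≤ distFunE P x}

/-!
For `Q ≪ P` both sides are equivalent to the chord inequality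
`(F c - F b) (G b - G a) ≤ (F b - F a) (G c - G b)` for `a ≤ b ≤ c` in `[-∞, ∞]`. It is the
likelihood ratio inequality for the adjacent intervals `(a, b]` and `(b, c]`, and read at
quantiles it is the convexity of `H` on `Im(F)`; where `F` is flat so is `G`, because `Q ≪ P`.

To pass from intervals to Borel sets `A ≤ B`, separate them at `c = sup A` by
`λ = sup_{u < c} Q(u, c] / P(u, c]`. The chord inequalities give `Q ≤ λ P` on intervals left of
`c`, and `λ P ≤ Q` on intervals right of `c` and on the atom `{c}` (a limit of intervals
`(v, c]`). Comparisons on intervals extend to all Borel sets via Stieltjes measures, and then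
`P(B) Q(A) ≤ λ P(B) P(A) ≤ P(A) Q(B)`.
-/

open Filter Topology ProbabilityTheory Function

namespace ENNReal

lemma le_div_mul_of_mul_le {a b c d : ℝ≥0∞} (hd₀ : d ≠ 0) (hd : d ≠ ∞)
    (h : a * d ≤ c * b) : a ≤ c / d * b := by
  rwa [← ENNReal.mul_div_right_comm, ENNReal.le_div_iff_mul_le (Or.inl hd₀) (Or.inl hd)]

lemma div_mul_le_of_mul_le {a b c d : ℝ≥0∞} (hd₀ : d = 0 → c = 0)
    (h : c * b ≤ a * d) : c / d * b ≤ a := by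
  rcases eq_or_ne d 0 with rfl | hd
  · simp [hd₀ rfl]
  · rw [← ENNReal.mul_div_right_comm]
    exact ENNReal.div_le_of_le_mul h

end ENNReal

namespace MeasureTheory

variable {μ ν : Measure ℝ}

lemma measureReal_Ioc_eq_sub [IsFiniteMeasure μ] {a b : ℝ} (hab : a ≤ b) :
    μ.real (Ioc a b) = μ.real (Iic b) - μ.real (Iic a) := by
  rw [← Iic_sdiff_Iic, measureReal_sdiff (Iic_subset_Iic.2 hab) measurableSet_Iic]

lemma continuousWithinAt_measureReal_Iic [IsFiniteMeasure μ] (x : ℝ) :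
    ContinuousWithinAt (fun y => μ.real (Iic y)) (Ici x) x := by
  have hInter : ⋂ y > x, Iic y = Iic x := by
    ext t
    simpa using forall_gt_imp_ge_iff_le_of_dense
  have h := tendsto_measure_biInter_gt (μ := μ) (s := Iic) (a := x)
    (fun _ _ => nullMeasurableSet_Iic) (fun _ _ _ hij => Iic_subset_Iic.2 hij)
    ⟨x + 1, by linarith, measure_ne_top _ _⟩
  rw [hInter] at h
  exact continuousWithinAt_Ioi_iff_Ici.1 ((ENNReal.tendsto_toReal (measure_ne_top _ _)).comp h)

theorem Measure.le_of_forall_measure_Ioc_le [IsFiniteMeasure ν]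
    (h : ∀ a b, μ (Ioc a b) ≤ ν (Ioc a b)) : μ ≤ ν := by
  have hIic (x : ℝ) : μ (Iic x) ≤ ν (Iic x) :=
    le_of_tendsto_of_tendsto' (tendsto_measure_Ioc_atBot μ x) (tendsto_measure_Ioc_atBot ν x)
      fun y => h y x
  have : IsFiniteMeasure μ := ⟨(le_of_tendsto_of_tendsto' (tendsto_measure_Iic_atTop μ)
    (tendsto_measure_Iic_atTop ν) hIic).trans_lt (measure_lt_top ν univ)⟩
  have hIoc {a b : ℝ} (hab : a ≤ b) : ν.real (Ioc a b) - μ.real (Ioc a b) =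
      (ν.real (Iic b) - μ.real (Iic b)) - (ν.real (Iic a) - μ.real (Iic a)) := by
    rw [measureReal_Ioc_eq_sub hab, measureReal_Ioc_eq_sub hab]; ring
  let f : StieltjesFunction ℝ :=
    { toFun := fun x => ν.real (Iic x) - μ.real (Iic x)
      mono' := fun a b hab => by
        have : μ.real (Ioc a b) ≤ ν.real (Ioc a b) :=
          ENNReal.toReal_mono (by finiteness) (h a b)
        linarith [hIoc hab]
      right_continuous' := fun x =>
        (continuousWithinAt_measureReal_Iic x).sub (continuousWithinAt_measureReal_Iic x) }
  have hν : ν = μ + f.measure := by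
    refine Measure.ext_of_Ioc _ _ fun a b hab => ?_
    rw [Measure.add_apply, f.measure_Ioc]
    change _ = _ + ENNReal.ofReal
      ((ν.real (Iic b) - μ.real (Iic b)) - (ν.real (Iic a) - μ.real (Iic a)))
    rw [← hIoc hab.le, ENNReal.ofReal_sub _ measureReal_nonneg, ofReal_measureReal,
      ofReal_measureReal, add_tsub_cancel_of_le (h a b)]
  exact hν ▸ Measure.le_add_right le_rfl

lemma measureReal_singleton_eq_cdf_sub_leftLim [IsProbabilityMeasure μ] (x : ℝ) :
    μ.real {x} = cdf μ x - leftLim (cdf μ) x := by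
  conv_lhs => rw [← measure_cdf μ]
  rw [measureReal_def, StieltjesFunction.measure_singleton,
    ENNReal.toReal_ofReal (sub_nonneg.2 ((monotone_cdf μ).leftLim_le le_rfl))]

lemma measure_mul_le_measure_mul_iff [IsFiniteMeasure μ] [IsFiniteMeasure ν]
    {s t s' t' : Set ℝ} :
    μ s * ν t ≤ μ s' * ν t' ↔ μ.real s * ν.real t ≤ μ.real s' * ν.real t' := by
  simp only [measureReal_def, ← ENNReal.toReal_mul]
  exact (ENNReal.toReal_le_toReal (by finiteness) (by finiteness)).symm

end MeasureTheory

section DistFun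

variable {P Q : Measure ℝ}

lemma distFunE_coe_eq_cdf [IsProbabilityMeasure P] (x : ℝ) : distFunE P x = cdf P x := by
  rw [cdf_eq_real, distFunE, ← EReal.preimage_coe_Iic]; rfl

lemma distFunE_bot : distFunE P ⊥ = 0 := by
  simp [distFunE]

lemma distFunE_top [IsProbabilityMeasure P] : distFunE P ⊤ = 1 := by
  simp [distFunE]

lemma monotone_distFunE (P : Measure ℝ) [IsFiniteMeasure P] : Monotone (distFunE P) :=
  fun _ _ hxy => measureReal_mono fun _ ht => le_trans ht hxy

lemma distFunE_le_one [IsProbabilityMeasure P] (x : EReal) : distFunE P x ≤ 1 :=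
  measureReal_le_one

lemma measureReal_preimage_coe_Ioc [IsFiniteMeasure P] {a b : EReal} (hab : a ≤ b) :
    P.real ((↑) ⁻¹' Ioc a b) = distFunE P b - distFunE P a := by
  rw [← Iic_sdiff_Iic, preimage_sdiff,
    measureReal_sdiff (preimage_mono (Iic_subset_Iic.2 hab))
      (measurable_coe_real_ereal measurableSet_Iic)]
  rfl

lemma distFunE_eq_of_absolutelyContinuous [IsFiniteMeasure P] [IsFiniteMeasure Q] (hac : Q ≪ P)
    {a b : EReal} (hab : a ≤ b) (h : distFunE P a = distFunE P b) :
    distFunE Q a = distFunE Q b := by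
  have hP : P ((↑) ⁻¹' Ioc a b) = 0 := by
    rw [← measureReal_eq_zero_iff, measureReal_preimage_coe_Ioc hab, h, sub_self]
  have hQ := measureReal_preimage_coe_Ioc (P := Q) hab
  rw [measureReal_def, hac hP, ENNReal.toReal_zero] at hQ
  linarith

end DistFun

section Quantile

variable {P Q : Measure ℝ}

lemma quantE_le {α : ℝ} {x : EReal} (h : α ≤ distFunE P x) : quantE P α ≤ x :=
  sInf_le h

lemma monotone_quantE (P : Measure ℝ) : Monotone (quantE P) :=
  fun _ _ hαβ => sInf_le_sInf fun _ hx => le_trans hαβ hx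

lemma le_distFunE_quantE [IsProbabilityMeasure P] {α : ℝ} (hα : α ≤ 1) :
    α ≤ distFunE P (quantE P α) := by
  suffices ∀ m : EReal, (∀ x, m < x → α ≤ distFunE P x) → α ≤ distFunE P m from
    this _ fun x hx => by
      obtain ⟨y, hy, hyx⟩ := sInf_lt_iff.1 hx
      exact hy.trans (monotone_distFunE P hyx.le)
  intro m hm
  induction m using EReal.rec with
  | bot =>
    rw [distFunE_bot]
    exact ge_of_tendsto (tendsto_cdf_atBot P) (Eventually.of_forall fun y => by
      simpa [distFunE_coe_eq_cdf] using hm y (EReal.bot_lt_coe y))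
  | coe m =>
    rw [distFunE_coe_eq_cdf]
    exact ge_of_tendsto (((cdf P).right_continuous m).mono Ioi_subset_Ici_self)
      (eventually_nhdsWithin_of_forall fun y hy => by
        simpa [distFunE_coe_eq_cdf] using hm y (EReal.coe_lt_coe_iff.2 hy))
  | top => rwa [distFunE_top]

lemma distFunE_quantE_of_mem_range [IsProbabilityMeasure P] {r : ℝ}
    (hr : r ∈ range (distFunE P)) : distFunE P (quantE P r) = r := by
  obtain ⟨x, rfl⟩ := hr
  exact le_antisymm (monotone_distFunE P (quantE_le le_rfl))
    (le_distFunE_quantE (distFunE_le_one x))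

lemma distFunE_quantE_distFunE [IsProbabilityMeasure P] [IsFiniteMeasure Q] (hac : Q ≪ P)
    (x : EReal) : distFunE Q (quantE P (distFunE P x)) = distFunE Q x :=
  distFunE_eq_of_absolutelyContinuous hac (quantE_le le_rfl)
    (distFunE_quantE_of_mem_range ⟨x, rfl⟩)

end Quantile

/-- The ordinal dominance curve `H = G ∘ F⁻¹`. -/
noncomputable def ordDomCurve (P Q : Measure ℝ) (α : ℝ) : ℝ :=
  distFunE Q (quantE P α)

def OrdDomCurveConvex (P Q : Measure ℝ) : Prop :=
  ∀ r s t : ℝ, r ∈ range (distFunE P) → s ∈ range (distFunE P) →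
    t ∈ range (distFunE P) → r < s → s < t →
    (ordDomCurve P Q s - ordDomCurve P Q r) / (s - r) ≤
      (ordDomCurve P Q t - ordDomCurve P Q s) / (t - s)

/-- The chord slopes of `x ↦ (F x, G x)` on `[-∞, ∞]` increase; cross-multiplied, so that chords
along which `F` is constant are allowed. -/
def MonotoneChordSlopes (P Q : Measure ℝ) : Prop :=
  ∀ ⦃a b c : EReal⦄, a ≤ b → b ≤ c →
    (distFunE P c - distFunE P b) * (distFunE Q b - distFunE Q a) ≤
      (distFunE P b - distFunE P a) * (distFunE Q c - distFunE Q b)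

section ChordSlopes

variable {P Q : Measure ℝ}

lemma IsLR.monotoneChordSlopes [IsFiniteMeasure P] [IsFiniteMeasure Q] (h : IsLR P Q) :
    MonotoneChordSlopes P Q := by
  intro a b c hab hbc
  have hmeas (x y : EReal) : MeasurableSet (((↑) : ℝ → EReal) ⁻¹' Ioc x y) :=
    measurable_coe_real_ereal measurableSet_Ioc
  have := h _ _ (hmeas a b) (hmeas b c)
    fun x hx y hy => EReal.coe_le_coe_iff.1 (hx.2.trans hy.1.le)
  rwa [measure_mul_le_measure_mul_iff, measureReal_preimage_coe_Ioc hab,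
    measureReal_preimage_coe_Ioc hbc, measureReal_preimage_coe_Ioc hab,
    measureReal_preimage_coe_Ioc hbc] at this

lemma MonotoneChordSlopes.ordDomCurveConvex [IsProbabilityMeasure P]
    (h : MonotoneChordSlopes P Q) : OrdDomCurveConvex P Q := by
  intro r s t hr hs ht hrs hst
  have := h (monotone_quantE P hrs.le) (monotone_quantE P hst.le)
  rw [distFunE_quantE_of_mem_range hr, distFunE_quantE_of_mem_range hs,
    distFunE_quantE_of_mem_range ht] at this
  rw [div_le_div_iff₀ (sub_pos.2 hrs) (sub_pos.2 hst)]
  simp only [ordDomCurve]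
  linarith

lemma OrdDomCurveConvex.monotoneChordSlopes [IsProbabilityMeasure P] [IsFiniteMeasure Q]
    (hac : Q ≪ P) (h : OrdDomCurveConvex P Q) : MonotoneChordSlopes P Q := by
  intro a b c hab hbc
  rcases (monotone_distFunE P hab).eq_or_lt with hFab | hFab
  · rw [distFunE_eq_of_absolutelyContinuous hac hab hFab, hFab]
    simp
  rcases (monotone_distFunE P hbc).eq_or_lt with hFbc | hFbc
  · rw [distFunE_eq_of_absolutelyContinuous hac hbc hFbc, hFbc]
    simp
  have := h _ _ _ ⟨a, rfl⟩ ⟨b, rfl⟩ ⟨c, rfl⟩ hFab hFbc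
  simp only [ordDomCurve, distFunE_quantE_distFunE hac] at this
  rw [div_le_div_iff₀ (sub_pos.2 hFab) (sub_pos.2 hFbc)] at this
  linarith

end ChordSlopes

section Intervals

variable {P Q : Measure ℝ}

lemma MonotoneChordSlopes.measure_Ioc_mul_le [IsFiniteMeasure P] [IsFiniteMeasure Q]
    (h : MonotoneChordSlopes P Q) {x y z : ℝ} (hxy : x ≤ y) (hyz : y ≤ z) :
    P (Ioc y z) * Q (Ioc x y) ≤ P (Ioc x y) * Q (Ioc y z) := by
  have hxy' : (x : EReal) ≤ y := EReal.coe_le_coe_iff.2 hxy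
  have hyz' : (y : EReal) ≤ z := EReal.coe_le_coe_iff.2 hyz
  rw [measure_mul_le_measure_mul_iff, ← EReal.preimage_coe_Ioc, ← EReal.preimage_coe_Ioc,
    measureReal_preimage_coe_Ioc hxy', measureReal_preimage_coe_Ioc hyz',
    measureReal_preimage_coe_Ioc hxy', measureReal_preimage_coe_Ioc hyz']
  exact h hxy' hyz'

lemma MonotoneChordSlopes.measure_Ioc_mul_le_of_le [IsFiniteMeasure P] [IsFiniteMeasure Q]
    (hac : Q ≪ P) (h : MonotoneChordSlopes P Q) {u v u' v' : ℝ} (hvu' : v ≤ u') :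
    P (Ioc u' v') * Q (Ioc u v) ≤ P (Ioc u v) * Q (Ioc u' v') := by
  rcases le_or_gt v u with hvu | huv
  · simp [Ioc_eq_empty_of_le hvu]
  rcases le_or_gt v' u' with hvu'' | hu'v'
  · simp [Ioc_eq_empty_of_le hvu'']
  have hsplit (μ : Measure ℝ) : μ (Ioc v v') = μ (Ioc v u') + μ (Ioc u' v') := by
    rw [← measure_union (Ioc_disjoint_Ioc_of_le le_rfl) measurableSet_Ioc,
      Ioc_union_Ioc_eq_Ioc hvu' hu'v'.le]
  rcases eq_or_ne (P (Ioc v u')) 0 with hgap | hgap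
  · -- a `P`-null gap can be skipped
    have := h.measure_Ioc_mul_le huv.le (hvu'.trans hu'v'.le)
    rwa [hsplit, hsplit, hgap, hac hgap, zero_add, zero_add] at this
  rw [← ENNReal.mul_le_mul_iff_right hgap (measure_ne_top _ _)]
  calc P (Ioc v u') * (P (Ioc u' v') * Q (Ioc u v))
      = P (Ioc u' v') * (P (Ioc v u') * Q (Ioc u v)) := mul_left_comm _ _ _
    _ ≤ P (Ioc u' v') * (P (Ioc u v) * Q (Ioc v u')) :=
        mul_le_mul_right (h.measure_Ioc_mul_le huv.le hvu') _
    _ = P (Ioc u v) * (P (Ioc u' v') * Q (Ioc v u')) := mul_left_comm _ _ _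
    _ ≤ P (Ioc u v) * (P (Ioc v u') * Q (Ioc u' v')) :=
        mul_le_mul_right (h.measure_Ioc_mul_le hvu' hu'v'.le) _
    _ = P (Ioc v u') * (P (Ioc u v) * Q (Ioc u' v')) := mul_left_comm _ _ _

lemma MonotoneChordSlopes.measure_singleton_mul_le [IsProbabilityMeasure P]
    [IsProbabilityMeasure Q] (h : MonotoneChordSlopes P Q) {u c : ℝ} (huc : u < c) :
    P {c} * Q (Ioc u c) ≤ P (Ioc u c) * Q {c} := by
  set F := cdf P
  set G := cdf Q
  have hnear : ∀ v ∈ Ioo u c, (F c - F v) * (G v - G u) ≤ (F v - F u) * (G c - G v) :=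
    fun v hv => by
      simpa only [distFunE_coe_eq_cdf] using
        h (EReal.coe_le_coe_iff.2 hv.1.le) (EReal.coe_le_coe_iff.2 hv.2.le)
  -- letting `v ↑ c` turns `(v, c]` into the atom `{c}` and `(u, v]` into `(u, c)`
  have hlim : (F c - leftLim F c) * (leftLim G c - G u) ≤
      (leftLim F c - F u) * (G c - leftLim G c) :=
    le_of_tendsto_of_tendsto
      ((tendsto_const_nhds.sub ((monotone_cdf P).tendsto_leftLim c)).mul
        (((monotone_cdf Q).tendsto_leftLim c).sub tendsto_const_nhds))
      ((((monotone_cdf P).tendsto_leftLim c).sub tendsto_const_nhds).mul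
        (tendsto_const_nhds.sub ((monotone_cdf Q).tendsto_leftLim c)))
      (eventually_of_mem (Ioo_mem_nhdsLT huc) hnear)
  rw [measure_mul_le_measure_mul_iff, measureReal_singleton_eq_cdf_sub_leftLim,
    measureReal_singleton_eq_cdf_sub_leftLim, measureReal_Ioc_eq_sub huc.le,
    measureReal_Ioc_eq_sub huc.le]
  simp only [← cdf_eq_real]
  linear_combination hlim

end Intervals

noncomputable def supIocRatio (P Q : Measure ℝ) (c : ℝ) : ℝ≥0∞ :=
  ⨆ u : Iio c, Q (Ioc (u : ℝ) c) / P (Ioc (u : ℝ) c)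

section Separation

variable {P Q : Measure ℝ}

lemma MonotoneChordSlopes.measure_Ioc_le_supIocRatio_mul [IsFiniteMeasure P] [IsFiniteMeasure Q]
    (hac : Q ≪ P) (h : MonotoneChordSlopes P Q) {c u v : ℝ} (hvc : v ≤ c) :
    Q (Ioc u v) ≤ supIocRatio P Q c * P (Ioc u v) := by
  rcases le_or_gt v u with hvu | huv
  · simp [Ioc_eq_empty_of_le hvu]
  rcases eq_or_ne (P (Ioc u c)) 0 with h0 | h0
  · simp [hac (measure_mono_null (Ioc_subset_Ioc_right hvc) h0)]
  have hsplit (μ : Measure ℝ) : μ (Ioc u c) = μ (Ioc u v) + μ (Ioc v c) := by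
    rw [← measure_union (Ioc_disjoint_Ioc_of_le le_rfl) measurableSet_Ioc,
      Ioc_union_Ioc_eq_Ioc huv.le hvc]
  -- the ratio on `(u, v]` is at most the mediant ratio on `(u, c]`
  have hmediant : Q (Ioc u v) * P (Ioc u c) ≤ Q (Ioc u c) * P (Ioc u v) := by
    rw [hsplit, hsplit, mul_add, add_mul, mul_comm (Q (Ioc u v)) (P (Ioc v c)),
      mul_comm (Q (Ioc v c))]
    exact add_le_add le_rfl (h.measure_Ioc_mul_le huv.le hvc)
  calc Q (Ioc u v) ≤ Q (Ioc u c) / P (Ioc u c) * P (Ioc u v) :=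
        ENNReal.le_div_mul_of_mul_le h0 (measure_ne_top _ _) hmediant
    _ ≤ supIocRatio P Q c * P (Ioc u v) := by
        gcongr
        exact le_iSup (fun w : Iio c => Q (Ioc (w : ℝ) c) / P (Ioc (w : ℝ) c))
          ⟨u, huv.trans_le hvc⟩

lemma MonotoneChordSlopes.supIocRatio_mul_measure_Ioc_le [IsFiniteMeasure P] [IsFiniteMeasure Q]
    (hac : Q ≪ P) (h : MonotoneChordSlopes P Q) {c u v : ℝ} (hcu : c ≤ u) :
    supIocRatio P Q c * P (Ioc u v) ≤ Q (Ioc u v) := by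
  rw [supIocRatio, ENNReal.iSup_mul]
  refine iSup_le fun w => ENNReal.div_mul_le_of_mul_le (fun h0 => hac h0) ?_
  rw [mul_comm (Q _), mul_comm (Q _)]
  exact h.measure_Ioc_mul_le_of_le hac hcu

lemma MonotoneChordSlopes.supIocRatio_mul_measure_singleton_le [IsProbabilityMeasure P]
    [IsProbabilityMeasure Q] (hac : Q ≪ P) (h : MonotoneChordSlopes P Q) (c : ℝ) :
    supIocRatio P Q c * P {c} ≤ Q {c} := by
  rw [supIocRatio, ENNReal.iSup_mul]
  refine iSup_le fun w => ENNReal.div_mul_le_of_mul_le (fun h0 => hac h0) ?_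
  rw [mul_comm (Q _), mul_comm (Q _)]
  exact h.measure_singleton_mul_le w.2

lemma MonotoneChordSlopes.measure_le_supIocRatio_mul [IsFiniteMeasure P] [IsFiniteMeasure Q]
    (hac : Q ≪ P) (h : MonotoneChordSlopes P Q) {c : ℝ} {S : Set ℝ} (hS : MeasurableSet S)
    (hSc : S ⊆ Iic c) :
    Q S ≤ supIocRatio P Q c * P S := by
  rcases eq_or_ne (supIocRatio P Q c) ∞ with htop | hfin
  · rcases eq_or_ne (P S) 0 with h0 | h0
    · simp [hac h0]
    · simp [htop, ENNReal.top_mul h0]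
  have : IsFiniteMeasure (supIocRatio P Q c • P) :=
    ⟨by simpa using ENNReal.mul_lt_top hfin.lt_top (measure_lt_top P univ)⟩
  have hle : Q.restrict (Iic c) ≤ (supIocRatio P Q c • P).restrict (Iic c) :=
    Measure.le_of_forall_measure_Ioc_le fun u v => by
      simp only [Measure.restrict_apply measurableSet_Ioc, Ioc_inter_Iic, Measure.smul_apply,
        smul_eq_mul]
      exact h.measure_Ioc_le_supIocRatio_mul hac inf_le_right
  simpa [Measure.restrict_apply hS, inter_eq_left.2 hSc] using hle S

lemma MonotoneChordSlopes.supIocRatio_mul_le_measure [IsProbabilityMeasure P]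
    [IsProbabilityMeasure Q] (hac : Q ≪ P) (h : MonotoneChordSlopes P Q) {c : ℝ} {S : Set ℝ}
    (hS : MeasurableSet S) (hSc : S ⊆ Ici c) :
    supIocRatio P Q c * P S ≤ Q S := by
  have hIoi : (supIocRatio P Q c • P).restrict (Ioi c) ≤ Q.restrict (Ioi c) :=
    Measure.le_of_forall_measure_Ioc_le fun u v => by
      simp only [Measure.restrict_apply measurableSet_Ioc, Ioc_inter_Ioi, Measure.smul_apply,
        smul_eq_mul]
      exact h.supIocRatio_mul_measure_Ioc_le hac le_sup_right
  have hSc' : S \ {c} ⊆ Ioi c := fun x hx => (hSc hx.1).lt_of_ne (Ne.symm hx.2)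
  have hatom : supIocRatio P Q c * P (S ∩ {c}) ≤ Q (S ∩ {c}) := by
    by_cases hc : c ∈ S
    · rw [inter_singleton_of_mem hc]
      exact h.supIocRatio_mul_measure_singleton_le hac c
    · simp [inter_singleton_eq_empty.2 hc]
  rw [← measure_inter_add_sdiff S (measurableSet_singleton c),
    ← measure_inter_add_sdiff (μ := Q) S (measurableSet_singleton c), mul_add]
  gcongr
  simpa [Measure.restrict_apply (hS.diff (measurableSet_singleton c)),
    inter_eq_left.2 hSc'] using hIoi (S \ {c})

lemma MonotoneChordSlopes.isLR [IsProbabilityMeasure P] [IsProbabilityMeasure Q] (hac : Q ≪ P)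
    (h : MonotoneChordSlopes P Q) : IsLR P Q := by
  intro A B hA hB hAB
  rcases A.eq_empty_or_nonempty with rfl | ⟨a, ha⟩
  · simp
  rcases B.eq_empty_or_nonempty with rfl | ⟨b, hb⟩
  · simp
  set c := sSup A
  have hAc : A ⊆ Iic c := fun x hx => le_csSup ⟨b, fun x hx => hAB x hx b hb⟩ hx
  have hBc : B ⊆ Ici c := fun y hy => csSup_le ⟨a, ha⟩ fun x hx => hAB x hx y hy
  calc P B * Q A ≤ P B * (supIocRatio P Q c * P A) :=
        mul_le_mul_right (h.measure_le_supIocRatio_mul hac hA hAc) _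
    _ = supIocRatio P Q c * P B * P A := by ring
    _ ≤ Q B * P A := mul_le_mul_left (h.supIocRatio_mul_le_measure hac hB hBc) _
    _ = P A * Q B := mul_comm _ _

end Separation

/-- **Corollary (lr-order ⇔ convexity of the ordinal dominance curve).** If
`Q ≪ P`, then `P ≤lr Q` iff the ordinal dominance curve
`H(α) = G(F⁻¹(α))` is convex on `Im(F) = {F(x) : x ∈ [-∞,∞]}`. -/
theorem stmt6 (P Q : Measure ℝ) [IsProbabilityMeasure P] [IsProbabilityMeasure Q]
    (hac : Q ≪ P) :
    IsLR P Q ↔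
      ∀ r s t : ℝ, r ∈ Set.range (distFunE P) → s ∈ Set.range (distFunE P) →
        t ∈ Set.range (distFunE P) → r < s → s < t →
        (distFunE Q (quantE P s) - distFunE Q (quantE P r)) / (s - r) ≤
          (distFunE Q (quantE P t) - distFunE Q (quantE P s)) / (t - s) :=
  ⟨fun h => h.monotoneChordSlopes.ordDomCurveConvex,
    fun h => (OrdDomCurveConvex.monotoneChordSlopes hac h).isLR hac⟩
end

section
/- Let (X,Y) be a pair of real-valued random variables and let 𝒳 := {x ∈ ℝ : P(X ≤ x) > 0 and P(X ≥ x) > 0} be the range of X. The following three conditions are equivalent: (i) for arbitrary Borel sets A₁, A₂ with A₁ < A₂ element-wise and all real y, P(X ∈ A₁, Y > y)·P(X ∈ A₂) ≤ P(X ∈ A₁)·P(X ∈ A₂, Y > y); (ii) the inequality in (i) holds for all A₁ = (x₀,x₁] and A₂ = (x₁,x₂] with x₀ < x₁ < x₂ and all real y; (iii) there exists a stochastic kernel K : ℝ × ℬ(ℝ) → [0,1] (each K(x,·) a probability measure, each K(·,B) measurable, and P(X ∈ A, Y ∈ B) = E[1_A(X)·K(X,B)] for all Borel A,B) such that K(x₁,·)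 ≤st K(x₂,·) for all x₁ < x₂ in 𝒳. -/
open MeasureTheory Set
open scoped ENNReal

/-- `P` is smaller than `Q` in the usual stochastic order. -/
def IsST (P Q : Measure ℝ) : Prop :=
  ∀ x : ℝ, Q (Iic x) ≤ P (Iic x)

/-!
For a rational `q`, let `β_q(A) = P(X ∈ A, Y > q)` and let `ν` be the law of `X`. Condition (ii)
says that `β_q(I) / ν(I)` increases from any interval `I` to the adjacent interval on its right;
this passes to separated closed intervals, hence to small closed balls, and Besicovitch
differentiation turns it into monotonicity of the density `x ↦ P(Y > q | X = x)` on a `ν`-conull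
set `E`. So the regular conditional distribution `κ` is stochastically increasing on `E`. A point
of the range of `X` has points of `E` on both sides, and the infimum of the CDFs of `κ z` over
`z ∈ E`, `z ≤ x`, is then a CDF: it defines a kernel that agrees with `κ` on `E` and is
stochastically increasing on the whole range, which gives (iii).

Conversely, under (iii), `g(x) = K(x, (y, ∞))` is nondecreasing on the range of `X`, a `ν`-conull
set, so `∫_{A₁} g dν · ν(A₂) ≤ ν(A₁) · ∫_{A₂} g dν` whenever `A₁ < A₂`, which is (i).
-/

open Filter Topology Metric ProbabilityTheory

lemma ENNReal.div_le_div_of_mul_le_mul {a b c d : ℝ≥0∞} (h : a * d ≤ b * c) (hb : b ≠ 0)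
    (hb' : b ≠ ∞) (hd : d ≠ 0) (hd' : d ≠ ∞) : a / b ≤ c / d := by
  rw [ENNReal.div_le_iff hb hb', ← ENNReal.mul_div_right_comm,
    ENNReal.le_div_iff_mul_le (Or.inl hd) (Or.inl hd')]
  rwa [mul_comm c]

/-- `β I / ν I ≤ β J / ν J` for adjacent intervals `I < J`, cross-multiplied so that null
intervals need no special case. -/
def RatioMonoIoc (β ν : Measure ℝ) : Prop :=
  ∀ ⦃a b c : ℝ⦄, a < b → b < c → β (Ioc a b) * ν (Ioc b c) ≤ ν (Ioc a b) * β (Ioc b c)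

lemma tendsto_measure_Ioc_sub_nhdsGT (ξ : Measure ℝ) [IsFiniteMeasure ξ] (a b : ℝ) :
    Tendsto (fun δ => ξ (Ioc (a - δ) b)) (𝓝[>] 0) (𝓝 (ξ (Icc a b))) := by
  have hIcc : ⋂ δ > (0 : ℝ), Ioc (a - δ) b = Icc a b := by
    ext x
    simp only [mem_iInter, mem_Ioc, mem_Icc]
    refine ⟨fun h => ⟨le_of_forall_pos_lt_add fun δ hδ => ?_, (h 1 one_pos).2⟩,
      fun ⟨hax, hxb⟩ δ hδ => ⟨by linarith, hxb⟩⟩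
    linarith [(h δ hδ).1]
  rw [← hIcc]
  exact tendsto_measure_biInter_gt (fun _ _ => nullMeasurableSet_Ioc)
    (fun δ δ' _ hδδ' => Ioc_subset_Ioc_left (by linarith)) ⟨1, one_pos, measure_ne_top _ _⟩

namespace RatioMonoIoc

variable {β ν : Measure ℝ}

theorem of_le [IsFiniteMeasure ν] (h : RatioMonoIoc β ν) (hβν : β ≪ ν) {a b c d : ℝ}
    (hab : a < b) (hbc : b ≤ c) (hcd : c < d) :
    β (Ioc a b) * ν (Ioc c d) ≤ ν (Ioc a b) * β (Ioc c d) := by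
  rcases hbc.eq_or_lt with rfl | hbc
  · exact h hab hcd
  have hsplit (ξ : Measure ℝ) : ξ (Ioc b d) = ξ (Ioc b c) + ξ (Ioc c d) := by
    rw [← measure_union (Ioc_disjoint_Ioc_of_le le_rfl) measurableSet_Ioc,
      Ioc_union_Ioc_eq_Ioc hbc.le hcd.le]
  by_cases hgap : ν (Ioc b c) = 0
  · simpa [hsplit, hgap, hβν hgap] using h hab (hbc.trans hcd)
  refine (ENNReal.mul_le_mul_iff_left hgap (measure_ne_top ν _)).mp ?_
  calc β (Ioc a b) * ν (Ioc c d) * ν (Ioc b c)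
      = β (Ioc a b) * ν (Ioc b c) * ν (Ioc c d) := by ring
    _ ≤ ν (Ioc a b) * β (Ioc b c) * ν (Ioc c d) := mul_le_mul_left (h hab hbc) _
    _ = ν (Ioc a b) * (β (Ioc b c) * ν (Ioc c d)) := by ring
    _ ≤ ν (Ioc a b) * (ν (Ioc b c) * β (Ioc c d)) := mul_le_mul_right (h hbc hcd) _
    _ = ν (Ioc a b) * β (Ioc c d) * ν (Ioc b c) := by ring

variable [IsFiniteMeasure β] [IsFiniteMeasure ν]

theorem Icc (h : RatioMonoIoc β ν) (hβν : β ≪ ν) {a b c d : ℝ}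
    (hab : a ≤ b) (hbc : b < c) (hcd : c ≤ d) :
    β (Icc a b) * ν (Icc c d) ≤ ν (Icc a b) * β (Icc c d) := by
  have lim (ξ ξ' : Measure ℝ) [IsFiniteMeasure ξ] [IsFiniteMeasure ξ'] :
      Tendsto (fun δ => ξ (Ioc (a - δ) b) * ξ' (Ioc (c - δ) d)) (𝓝[>] 0)
        (𝓝 (ξ (Set.Icc a b) * ξ' (Set.Icc c d))) :=
    ENNReal.Tendsto.mul (tendsto_measure_Ioc_sub_nhdsGT ξ a b) (Or.inr (measure_ne_top _ _))
      (tendsto_measure_Ioc_sub_nhdsGT ξ' c d) (Or.inr (measure_ne_top _ _))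
  refine le_of_tendsto_of_tendsto (lim β ν) (lim ν β) ?_
  filter_upwards [Ioo_mem_nhdsGT (sub_pos.mpr hbc)] with δ ⟨hδ, hδbc⟩
  exact h.of_le hβν (by linarith) (by linarith) (by linarith)

theorem le_of_tendsto_closedBall (h : RatioMonoIoc β ν) (hβν : β ≪ ν) {x z : ℝ} (hxz : x < z)
    (hx : x ∈ ν.support) (hz : z ∈ ν.support) {u v : ℝ≥0∞}
    (hu : Tendsto (fun r => β (closedBall x r) / ν (closedBall x r)) (𝓝[>] 0) (𝓝 u))
    (hv : Tendsto (fun r => β (closedBall z r) / ν (closedBall z r)) (𝓝[>] 0) (𝓝 v)) :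
    u ≤ v := by
  refine le_of_tendsto_of_tendsto hu hv ?_
  filter_upwards [Ioo_mem_nhdsGT (half_pos (sub_pos.mpr hxz))] with r ⟨hr, hrxz⟩
  have hpos {y : ℝ} (hy : y ∈ ν.support) : ν (closedBall y r) ≠ 0 :=
    ((ν.mem_support_iff_forall y).mp hy _ (closedBall_mem_nhds y hr)).ne'
  have hx' := hpos hx
  have hz' := hpos hz
  simp only [Real.closedBall_eq_Icc] at hx' hz' ⊢
  exact ENNReal.div_le_div_of_mul_le_mul (h.Icc hβν (by linarith) (by linarith) (by linarith))
    hx' (measure_ne_top _ _) hz' (measure_ne_top _ _)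

theorem exists_mem_ae_monotoneOn_rnDeriv (h : RatioMonoIoc β ν) (hβν : β ≪ ν) :
    ∃ E ∈ ae ν, MonotoneOn (β.rnDeriv ν) E := by
  refine ⟨{x | Tendsto (fun r => β (closedBall x r) / ν (closedBall x r)) (𝓝[>] 0)
      (𝓝 (β.rnDeriv ν x))} ∩ ν.support,
    inter_mem (Besicovitch.ae_tendsto_rnDeriv β ν) ν.support_mem_ae, ?_⟩
  rintro x ⟨hx, hxs⟩ z ⟨hz, hzs⟩ hxz
  rcases hxz.eq_or_lt with rfl | hxz
  · rfl
  · exact h.le_of_tendsto_closedBall hβν hxz hxs hzs hx hz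

end RatioMonoIoc

lemma measure_Iic_le_iff_measure_Ioi_le {P Q : Measure ℝ} [IsProbabilityMeasure P]
    [IsProbabilityMeasure Q] (y : ℝ) : Q (Iic y) ≤ P (Iic y) ↔ P (Ioi y) ≤ Q (Ioi y) := by
  rw [← compl_Iic, prob_compl_eq_one_sub measurableSet_Iic,
    prob_compl_eq_one_sub measurableSet_Iic,
    (ENNReal.sub_le_sub_iff_left prob_le_one ENNReal.one_ne_top).symm]

lemma isST_of_forall_rat {P Q : Measure ℝ} [IsProbabilityMeasure P] [IsProbabilityMeasure Q]
    (h : ∀ q : ℚ, Q (Iic (q : ℝ)) ≤ P (Iic (q : ℝ))) : IsST P Q := by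
  intro x
  rw [← ofReal_cdf P, ← ofReal_cdf Q, ← (cdf P).iInf_rat_gt_eq, ← (cdf Q).iInf_rat_gt_eq]
  refine ENNReal.ofReal_le_ofReal (ciInf_mono ⟨0, ?_⟩ fun r => ?_)
  · rintro _ ⟨r, rfl⟩
    exact cdf_nonneg _ _
  · rw [← ENNReal.ofReal_le_ofReal_iff (cdf_nonneg _ _), ofReal_cdf, ofReal_cdf]
    exact h r

lemma measure_Iic_rat_eq_iInf (ν : Measure ℝ) [IsFiniteMeasure ν] (q : ℚ) :
    ν (Iic (q : ℝ)) = ⨅ r : Ioi q, ν (Iic (r : ℝ)) := by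
  have hIic : Iic (q : ℝ) = ⋂ r : Ioi q, Iic (r : ℝ) := by
    ext x
    simp only [mem_Iic, mem_iInter]
    refine ⟨fun hx r => hx.trans (by exact_mod_cast r.2.le), fun h => ?_⟩
    exact le_of_forall_lt_rat_imp_le fun r hr => h ⟨r, by exact_mod_cast hr⟩
  rw [hIic]
  exact Monotone.measure_iInter (fun r r' hrr' => Iic_subset_Iic.mpr (by exact_mod_cast hrr'))
    (fun _ => nullMeasurableSet_Iic) ⟨⟨q + 1, by simp⟩, measure_ne_top _ _⟩

lemma exists_markovKernel_of_ratCDF {α : Type*} [MeasurableSpace α] (f : α → ℚ → ℝ)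
    (hf : Measurable f) :
    ∃ K : Kernel α ℝ, IsMarkovKernel K ∧
      ∀ a, IsRatStieltjesPoint f a → ∀ q : ℚ, K a (Iic (q : ℝ)) = ENNReal.ofReal (f a q) := by
  refine ⟨⟨fun a => (stieltjesOfMeasurableRat f hf a).measure,
    measurable_measure_stieltjesOfMeasurableRat hf⟩,
    ⟨instIsProbabilityMeasure_stieltjesOfMeasurableRat hf⟩, fun a ha q => ?_⟩
  rw [Kernel.coe_mk, measure_stieltjesOfMeasurableRat_Iic, stieltjesOfMeasurableRat_eq,
    toRatCDF_of_isRatStieltjesPoint ha]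

noncomputable def cdfEnvelope (κ : Kernel ℝ ℝ) (E : Set ℝ) (x : ℝ) (q : ℚ) : ℝ≥0∞ :=
  ⨅ z ∈ E ∩ Iic x, κ z (Iic (q : ℝ))

section cdfEnvelope

variable {κ : Kernel ℝ ℝ} {E : Set ℝ}

lemma antitone_cdfEnvelope (q : ℚ) : Antitone fun x => cdfEnvelope κ E x q :=
  fun _ _ hxx' => biInf_mono fun _ hz => ⟨hz.1, hz.2.trans hxx'⟩

lemma cdfEnvelope_le {x z : ℝ} (hz : z ∈ E) (hzx : z ≤ x) (q : ℚ) :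
    cdfEnvelope κ E x q ≤ κ z (Iic (q : ℝ)) :=
  biInf_le _ ⟨hz, hzx⟩

variable (hE : ∀ z ∈ E, ∀ z' ∈ E, z ≤ z' → IsST (κ z) (κ z'))
include hE

lemma le_cdfEnvelope {x z : ℝ} (hz : z ∈ E) (hxz : x ≤ z) (q : ℚ) :
    κ z (Iic (q : ℝ)) ≤ cdfEnvelope κ E x q :=
  le_iInf₂ fun _ hw => hE _ hw.1 z hz (hw.2.trans hxz) q

lemma cdfEnvelope_of_mem {x : ℝ} (hx : x ∈ E) (q : ℚ) :
    cdfEnvelope κ E x q = κ x (Iic (q : ℝ)) :=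
  le_antisymm (cdfEnvelope_le hx le_rfl q) (le_cdfEnvelope hE hx le_rfl q)

lemma isRatStieltjesPoint_cdfEnvelope [IsMarkovKernel κ] {x z z' : ℝ} (hz : z ∈ E)
    (hzx : z ≤ x) (hz' : z' ∈ E) (hxz' : x ≤ z') :
    IsRatStieltjesPoint (fun x q => (cdfEnvelope κ E x q).toReal) x := by
  have hne_top (q : ℚ) : cdfEnvelope κ E x q ≠ ∞ :=
    ne_top_of_le_ne_top (measure_ne_top _ _) (cdfEnvelope_le hz hzx q)
  have hlim_toReal {l : Filter ℚ} {c : ℝ≥0∞} (hc : c ≠ ∞)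
      (h : Tendsto (cdfEnvelope κ E x) l (𝓝 c)) :
      Tendsto (fun q => (cdfEnvelope κ E x q).toReal) l (𝓝 c.toReal) :=
    (ENNReal.tendsto_toReal hc).comp h
  refine ⟨fun q r hqr => ENNReal.toReal_mono (hne_top r) ?_, ?_, ?_, fun q => ?_⟩
  · exact iInf₂_mono fun _ _ => measure_mono (Iic_subset_Iic.mpr (by exact_mod_cast hqr))
  · refine hlim_toReal ENNReal.one_ne_top (tendsto_of_tendsto_of_tendsto_of_le_of_le
      ?_ tendsto_const_nhds (le_cdfEnvelope hE hz' hxz') fun q => ?_)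
    · rw [← measure_univ (μ := κ z')]
      exact (tendsto_measure_Iic_atTop _).comp (tendsto_ratCast_atTop_iff.mpr tendsto_id)
    · exact (cdfEnvelope_le hz hzx q).trans prob_le_one
  · refine hlim_toReal ENNReal.zero_ne_top (tendsto_of_tendsto_of_tendsto_of_le_of_le
      tendsto_const_nhds ?_ (fun _ => zero_le) (cdfEnvelope_le hz hzx))
    have h := (ENNReal.tendsto_ofReal (tendsto_cdf_atBot (κ z))).comp
      (tendsto_ratCast_atBot_iff.mpr tendsto_id)
    simpa [Function.comp_def, ofReal_cdf] using h
  · rw [← ENNReal.toReal_iInf (f := fun r : Ioi q => cdfEnvelope κ E x r) fun r => hne_top r]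
    congr 1
    simp only [cdfEnvelope]
    rw [iInf_comm]
    refine iInf_congr fun w => ?_
    rw [iInf_comm]
    exact iInf_congr fun _ => (measure_Iic_rat_eq_iInf _ q).symm

end cdfEnvelope

theorem exists_kernel_isST_of_isST_on (κ : Kernel ℝ ℝ) [IsMarkovKernel κ] {E : Set ℝ}
    (hE : ∀ z ∈ E, ∀ z' ∈ E, z ≤ z' → IsST (κ z) (κ z')) :
    ∃ K : Kernel ℝ ℝ, IsMarkovKernel K ∧ (∀ x ∈ E, K x = κ x) ∧
      ∀ x x', (∃ z ∈ E, z ≤ x) → (∃ z ∈ E, x' ≤ z) → x ≤ x' → IsST (K x) (K x') := by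
  have hmeas : Measurable fun x q => (cdfEnvelope κ E x q).toReal :=
    measurable_pi_lambda _ fun q => (antitone_cdfEnvelope q).measurable.ennreal_toReal
  obtain ⟨K, hK, hKcdf⟩ := exists_markovKernel_of_ratCDF _ hmeas
  have hK_Iic {x : ℝ} {z z' : ℝ} (hz : z ∈ E) (hzx : z ≤ x) (hz' : z' ∈ E) (hxz' : x ≤ z')
      (q : ℚ) : K x (Iic (q : ℝ)) = cdfEnvelope κ E x q := by
    rw [hKcdf x (isRatStieltjesPoint_cdfEnvelope hE hz hzx hz' hxz') q,
      ENNReal.ofReal_toReal (ne_top_of_le_ne_top (measure_ne_top _ _) (cdfEnvelope_le hz hzx q))]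
  refine ⟨K, hK, fun x hx => ?_, fun x x' ⟨z, hz, hzx⟩ ⟨z', hz', hxz'⟩ hxx' => ?_⟩
  · have h (q : ℚ) : K x (Iic (q : ℝ)) = κ x (Iic (q : ℝ)) := by
      rw [hK_Iic hx le_rfl hx le_rfl, cdfEnvelope_of_mem hE hx]
    exact Measure.ext_of_Iic _ _ fun t => le_antisymm
      (isST_of_forall_rat (fun q => (h q).le) t) (isST_of_forall_rat (fun q => (h q).ge) t)
  · refine isST_of_forall_rat fun q => ?_
    rw [hK_Iic hz (hzx.trans hxx') hz' hxz', hK_Iic hz hzx hz' (hxx'.trans hxz')]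
    exact antitone_cdfEnvelope q hxx'

lemma ae_measure_Iic_pos {α : Type*} [TopologicalSpace α] [LinearOrder α] [OrderTopology α]
    [SecondCountableTopology α] [MeasurableSpace α] (ν : Measure α) :
    ∀ᵐ x ∂ν, 0 < ν (Iic x) := by
  simp only [ae_iff, not_lt, nonpos_iff_eq_zero]
  refine measure_null_of_locally_null _ fun x hx => ?_
  by_cases h : ∃ y, ν (Iic y) = 0 ∧ x < y
  · obtain ⟨y, hy, hxy⟩ := h
    exact ⟨Iio y, mem_nhdsWithin_of_mem_nhds (Iio_mem_nhds hxy),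
      measure_mono_null Iio_subset_Iic_self hy⟩
  · simp only [not_exists, not_and, not_lt] at h
    exact ⟨Iic x, mem_of_superset self_mem_nhdsWithin h, hx⟩

lemma ae_measure_Ici_pos {α : Type*} [TopologicalSpace α] [LinearOrder α] [OrderTopology α]
    [SecondCountableTopology α] [MeasurableSpace α] (ν : Measure α) : ∀ᵐ x ∂ν, 0 < ν (Ici x) :=
  ae_measure_Iic_pos (α := αᵒᵈ) ν

lemma setLIntegral_mul_measure_le_of_monotoneOn {α : Type*} [MeasurableSpace α] [Preorder α]
    {ν : Measure α} {g : α → ℝ≥0∞} (hg : Measurable g) {S : Set α} (hS : S ∈ ae ν)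
    (hgS : MonotoneOn g S) {A₁ A₂ : Set α} (hA₁ : MeasurableSet A₁) (hA₂ : MeasurableSet A₂)
    (hA : ∀ a₁ ∈ A₁, ∀ a₂ ∈ A₂, a₁ ≤ a₂) :
    (∫⁻ x in A₁, g x ∂ν) * ν A₂ ≤ ν A₁ * ∫⁻ x in A₂, g x ∂ν := by
  calc (∫⁻ x in A₁, g x ∂ν) * ν A₂ = ∫⁻ x₁ in A₁, ∫⁻ _ in A₂, g x₁ ∂ν ∂ν := by
        simp_rw [setLIntegral_const]
        rw [lintegral_mul_const _ hg]
    _ ≤ ∫⁻ _ in A₁, ∫⁻ x₂ in A₂, g x₂ ∂ν ∂ν := by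
        refine lintegral_mono_ae ((ae_restrict_iff' hA₁).mpr ?_)
        filter_upwards [hS] with x₁ hx₁ hx₁A
        refine lintegral_mono_ae ((ae_restrict_iff' hA₂).mpr ?_)
        filter_upwards [hS] with x₂ hx₂ hx₂A
        exact hgS hx₁ hx₂ (hA x₁ hx₁A x₂ hx₂A)
    _ = ν A₁ * ∫⁻ x in A₂, g x ∂ν := by rw [setLIntegral_const, mul_comm]

section RandomVariables

variable {Ω : Type*} [MeasurableSpace Ω] {μ : Measure Ω} {X Y : Ω → ℝ}

lemma measure_mem_and_mem_eq_setLIntegral_condKernel [IsFiniteMeasure μ] (hX : Measurable X)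
    (hY : Measurable Y) {A B : Set ℝ} (hA : MeasurableSet A) (hB : MeasurableSet B) :
    μ {ω | X ω ∈ A ∧ Y ω ∈ B} =
      ∫⁻ x in A, (μ.map fun ω => (X ω, Y ω)).condKernel x B ∂(μ.map X) := by
  rw [← Measure.fst_map_prodMk₀ hY.aemeasurable,
    Measure.setLIntegral_condKernel_eq_measure_prod hA hB,
    Measure.map_apply (hX.prodMk hY) (hA.prod hB)]
  rfl

lemma exists_mem_ae_monotoneOn_condKernel_Ioi [IsFiniteMeasure μ] (hX : Measurable X)
    (hY : Measurable Y) (y : ℝ)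
    (h : ∀ ⦃a b c : ℝ⦄, a < b → b < c →
      μ {ω | X ω ∈ Ioc a b ∧ y < Y ω} * μ {ω | X ω ∈ Ioc b c} ≤
        μ {ω | X ω ∈ Ioc a b} * μ {ω | X ω ∈ Ioc b c ∧ y < Y ω}) :
    ∃ E ∈ ae (μ.map X),
      MonotoneOn (fun x => (μ.map fun ω => (X ω, Y ω)).condKernel x (Ioi y)) E := by
  set ν := μ.map X
  set κ := (μ.map fun ω => (X ω, Y ω)).condKernel
  set β := ν.withDensity fun x => κ x (Ioi y)
  have hκy : Measurable fun x => κ x (Ioi y) := κ.measurable_coe measurableSet_Ioi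
  have : IsFiniteMeasure β := isFiniteMeasure_withDensity <| ne_top_of_le_ne_top
    (measure_ne_top ν univ) (by simpa using lintegral_mono fun x => prob_le_one (μ := κ x))
  have hβ (s : Set ℝ) (hs : MeasurableSet s) : β s = μ {ω | X ω ∈ s ∧ y < Y ω} := by
    rw [withDensity_apply _ hs]
    exact (measure_mem_and_mem_eq_setLIntegral_condKernel hX hY hs measurableSet_Ioi).symm
  have hν (s : Set ℝ) (hs : MeasurableSet s) : ν s = μ {ω | X ω ∈ s} := Measure.map_apply hX hs
  have hβν : RatioMonoIoc β ν := fun a b c hab hbc => by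
    simpa only [hβ _ measurableSet_Ioc, hν _ measurableSet_Ioc] using h hab hbc
  obtain ⟨E, hE, hEmono⟩ :=
    hβν.exists_mem_ae_monotoneOn_rnDeriv (withDensity_absolutelyContinuous _ _)
  exact ⟨E ∩ {x | β.rnDeriv ν x = κ x (Ioi y)},
    inter_mem hE (Measure.rnDeriv_withDensity ν hκy),
    (hEmono.mono inter_subset_left).congr fun x hx => hx.2⟩

theorem exists_kernel_isST_of_ratioMonoIoc [IsProbabilityMeasure μ] (hX : Measurable X)
    (hY : Measurable Y)
    (h : ∀ x₀ x₁ x₂ : ℝ, x₀ < x₁ → x₁ < x₂ → ∀ y : ℝ,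
      μ {ω | X ω ∈ Ioc x₀ x₁ ∧ y < Y ω} * μ {ω | X ω ∈ Ioc x₁ x₂} ≤
        μ {ω | X ω ∈ Ioc x₀ x₁} * μ {ω | X ω ∈ Ioc x₁ x₂ ∧ y < Y ω}) :
    ∃ K : Kernel ℝ ℝ, IsMarkovKernel K ∧
      (∀ A B : Set ℝ, MeasurableSet A → MeasurableSet B →
        μ {ω | X ω ∈ A ∧ Y ω ∈ B} = ∫⁻ x in A, K x B ∂(μ.map X)) ∧
      ∀ x₁ x₂ : ℝ,
        (0 < μ {ω | X ω ≤ x₁} ∧ 0 < μ {ω | x₁ ≤ X ω}) →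
        (0 < μ {ω | X ω ≤ x₂} ∧ 0 < μ {ω | x₂ ≤ X ω}) →
        x₁ < x₂ → IsST (K x₁) (K x₂) := by
  set ν := μ.map X
  set κ := (μ.map fun ω => (X ω, Y ω)).condKernel
  choose E hE hEmono using fun q : ℚ =>
    exists_mem_ae_monotoneOn_condKernel_Ioi hX hY q fun a b c hab hbc => h a b c hab hbc q
  have hEae : ⋂ q, E q ∈ ae ν := countable_iInter_mem.mpr hE
  have hκE : ∀ z ∈ ⋂ q, E q, ∀ z' ∈ ⋂ q, E q, z ≤ z' → IsST (κ z) (κ z') :=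
    fun z hz z' hz' hzz' => isST_of_forall_rat fun q =>
      (measure_Iic_le_iff_measure_Ioi_le _).mpr
        (hEmono q (mem_iInter.mp hz q) (mem_iInter.mp hz' q) hzz')
  obtain ⟨K, hK, hKκ, hKmono⟩ := exists_kernel_isST_of_isST_on κ hκE
  refine ⟨K, hK, fun A B hA hB => ?_, fun x₁ x₂ hx₁ hx₂ h12 => ?_⟩
  · rw [measure_mem_and_mem_eq_setLIntegral_condKernel hX hY hA hB]
    refine lintegral_congr_ae (ae_restrict_of_ae ?_)
    filter_upwards [hEae] with x hx
    rw [hKκ x hx]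
  · obtain ⟨z, hzx, hz⟩ := Measure.exists_mem_of_measure_ne_zero_of_ae (s := Iic x₁)
      (by rw [Measure.map_apply hX measurableSet_Iic]; exact hx₁.1.ne') (ae_restrict_of_ae hEae)
    obtain ⟨z', hxz', hz'⟩ := Measure.exists_mem_of_measure_ne_zero_of_ae (s := Ici x₂)
      (by rw [Measure.map_apply hX measurableSet_Ici]; exact hx₂.2.ne') (ae_restrict_of_ae hEae)
    exact hKmono x₁ x₂ ⟨z, hz, hzx⟩ ⟨z', hz', hxz'⟩ h12.le

theorem measure_mul_le_of_isST_kernel (hX : Measurable X) (K : Kernel ℝ ℝ) [IsMarkovKernel K]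
    (hdis : ∀ A B : Set ℝ, MeasurableSet A → MeasurableSet B →
      μ {ω | X ω ∈ A ∧ Y ω ∈ B} = ∫⁻ x in A, K x B ∂(μ.map X))
    (hK : ∀ x₁ x₂ : ℝ,
      (0 < μ {ω | X ω ≤ x₁} ∧ 0 < μ {ω | x₁ ≤ X ω}) →
      (0 < μ {ω | X ω ≤ x₂} ∧ 0 < μ {ω | x₂ ≤ X ω}) →
      x₁ < x₂ → IsST (K x₁) (K x₂))
    {A₁ A₂ : Set ℝ} (hA₁ : MeasurableSet A₁) (hA₂ : MeasurableSet A₂)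
    (hA : ∀ a₁ ∈ A₁, ∀ a₂ ∈ A₂, a₁ < a₂) (y : ℝ) :
    μ {ω | X ω ∈ A₁ ∧ y < Y ω} * μ {ω | X ω ∈ A₂} ≤
      μ {ω | X ω ∈ A₁} * μ {ω | X ω ∈ A₂ ∧ y < Y ω} := by
  set ν := μ.map X
  set range := {x | 0 < μ {ω | X ω ≤ x} ∧ 0 < μ {ω | x ≤ X ω}}
  have hν {A : Set ℝ} (hA : MeasurableSet A) : μ {ω | X ω ∈ A} = ν A :=
    (Measure.map_apply hX hA).symm
  have hrange : range ∈ ae ν := by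
    filter_upwards [ae_measure_Iic_pos ν, ae_measure_Ici_pos ν] with x hIic hIci
    rw [← hν measurableSet_Iic] at hIic
    rw [← hν measurableSet_Ici] at hIci
    exact ⟨hIic, hIci⟩
  have hmono : MonotoneOn (fun x => K x (Ioi y)) range := by
    rintro x₁ hx₁ x₂ hx₂ h12
    rcases h12.eq_or_lt with rfl | h12
    · rfl
    exact (measure_Iic_le_iff_measure_Ioi_le y).mp (hK x₁ x₂ hx₁ hx₂ h12 y)
  rw [hν hA₁, hν hA₂, show μ {ω | X ω ∈ A₁ ∧ y < Y ω} = _ from hdis A₁ _ hA₁ measurableSet_Ioi,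
    show μ {ω | X ω ∈ A₂ ∧ y < Y ω} = _ from hdis A₂ _ hA₂ measurableSet_Ioi]
  exact setLIntegral_mul_measure_le_of_monotoneOn (K.measurable_coe measurableSet_Ioi) hrange
    hmono hA₁ hA₂ fun a₁ h₁ a₂ h₂ => (hA a₁ h₁ a₂ h₂).le

end RandomVariables

/-- **Theorem (stochastic order for conditional distributions).** For a random
pair `(X,Y)`, the following are equivalent: (i) the TP2-type inequality for
upper sets `{Y > y}` over Borel sets `A₁ < A₂`; (ii) the same for adjacent
intervals; (iii) there is a Markov kernel `K` giving the conditional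
distribution of `Y` given `X` with `K(x₁,·) ≤st K(x₂,·)` for `x₁ < x₂` in the
range `𝒳` of `X`. -/
theorem stmt7 {Ω : Type*} [MeasurableSpace Ω] (μ : Measure Ω) [IsProbabilityMeasure μ]
    (X Y : Ω → ℝ) (hX : Measurable X) (hY : Measurable Y) :
    List.TFAE
      [ ∀ A₁ A₂ : Set ℝ, MeasurableSet A₁ → MeasurableSet A₂ →
          (∀ a₁ ∈ A₁, ∀ a₂ ∈ A₂, a₁ < a₂) → ∀ y : ℝ,
          μ {ω | X ω ∈ A₁ ∧ y < Y ω} * μ {ω | X ω ∈ A₂} ≤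
            μ {ω | X ω ∈ A₁} * μ {ω | X ω ∈ A₂ ∧ y < Y ω},
        ∀ x₀ x₁ x₂ : ℝ, x₀ < x₁ → x₁ < x₂ → ∀ y : ℝ,
          μ {ω | X ω ∈ Ioc x₀ x₁ ∧ y < Y ω} * μ {ω | X ω ∈ Ioc x₁ x₂} ≤
            μ {ω | X ω ∈ Ioc x₀ x₁} * μ {ω | X ω ∈ Ioc x₁ x₂ ∧ y < Y ω},
        ∃ K : ProbabilityTheory.Kernel ℝ ℝ, ProbabilityTheory.IsMarkovKernel K ∧
          (∀ A B : Set ℝ, MeasurableSet A → MeasurableSet B →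
            μ {ω | X ω ∈ A ∧ Y ω ∈ B} = ∫⁻ x in A, K x B ∂(μ.map X)) ∧
          ∀ x₁ x₂ : ℝ,
            (0 < μ {ω | X ω ≤ x₁} ∧ 0 < μ {ω | x₁ ≤ X ω}) →
            (0 < μ {ω | X ω ≤ x₂} ∧ 0 < μ {ω | x₂ ≤ X ω}) →
            x₁ < x₂ → IsST (K x₁) (K x₂) ] := by
  tfae_have 1 → 2 := fun h x₀ x₁ x₂ _ _ y => h _ _ measurableSet_Ioc measurableSet_Ioc
    (fun _ ha₁ _ ha₂ => ha₁.2.trans_lt ha₂.1) y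
  tfae_have 2 → 3 := exists_kernel_isST_of_ratioMonoIoc hX hY
  tfae_have 3 → 1 := fun ⟨K, _, hdis, hK⟩ _ _ hA₁ hA₂ hA y =>
    measure_mul_le_of_isST_kernel hX K hdis hK hA₁ hA₂ hA y
  tfae_finish
end

section
/- Suppose the random pair (X,Y) in ℝ² has a discrete distribution with probability mass function h(x,y) = P(X = x, Y = y), and let K be a stochastic kernel representing the conditional distribution of Y given X. Then the following two conditions are equivalent: (i) for arbitrary real numbers x₁ < x₂ with P(X = x₁) > 0 and P(X = x₂) > 0, K(x₁,·) ≤lr K(x₂,·), where K(x,B) = P(Y ∈ B | X = x); (ii) the function h is totally positive of order two, i.e. h(x₂,y₁)·h(x₁,y₂) ≤ h(x₁,y₁)·h(x₂,y₂) for all x₁ < x₂ and y₁ < y₂. -/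
open MeasureTheory Set
open scoped ENNReal

/-!
Every conditional law `K(x,·)` is carried by the countable set of second coordinates of the
support, so `K(x,B) = ∑_{y ∈ B} h(x,y) / P(X = x)`. Expanding `K(x₁,B) K(x₂,A)` as a double sum
over `b ∈ B`, `a ∈ A`, the likelihood ratio inequality follows term by term from total positivity
(the terms with `a = b` agree on both sides); conversely, total positivity is the likelihood ratio
inequality for `A = {y₁}`, `B = {y₂}`. Atoms with `P(X = x) = 0` make the left side of the total
positivity inequality vanish.
-/

theorem isLR_smul_iff {P Q : Measure ℝ} {c d : ℝ≥0∞} (hc₀ : c ≠ 0) (hc : c ≠ ∞)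
    (hd₀ : d ≠ 0) (hd : d ≠ ∞) : IsLR (c • P) (d • Q) ↔ IsLR P Q := by
  have hcd₀ : c * d ≠ 0 := mul_ne_zero hc₀ hd₀
  have hcd : c * d ≠ ∞ := ENNReal.mul_ne_top hc hd
  refine forall₄_congr fun A B _ _ => imp_congr_right fun _ => ?_
  simp only [Measure.smul_apply, smul_eq_mul, mul_mul_mul_comm c]
  exact ENNReal.mul_le_mul_iff_right hcd₀ hcd

theorem measure_eq_tsum_singleton_inter {α : Type*} [MeasurableSpace α]
    [MeasurableSingletonClass α] {P : Measure α} {T : Set α} (hT : T.Countable)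
    (hPT : P Tᶜ = 0) (B : Set α) : P B = ∑' b : ↥(B ∩ T), P {(b : α)} := by
  rw [← measure_inter_conull hPT]
  exact (tsum_measure_preimage_singleton (f := id) (hT.mono inter_subset_right)
    fun y _ => measurableSet_singleton y).symm

theorem isLR_iff_of_countable {P Q : Measure ℝ} {T : Set ℝ} (hT : T.Countable)
    (hP : P Tᶜ = 0) (hQ : Q Tᶜ = 0) :
    IsLR P Q ↔ ∀ y₁ y₂ : ℝ, y₁ < y₂ → Q {y₁} * P {y₂} ≤ P {y₁} * Q {y₂} := by
  constructor
  · intro h y₁ y₂ hy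
    rw [mul_comm]
    exact h {y₁} {y₂} (measurableSet_singleton _) (measurableSet_singleton _)
      fun a ha b hb => ha ▸ hb ▸ hy.le
  · intro h A B _ _ hAB
    have hpt : ∀ a ∈ A, ∀ b ∈ B, P {b} * Q {a} ≤ P {a} * Q {b} := fun a ha b hb =>
      (hAB a ha b hb).lt_or_eq.elim (fun hlt => mul_comm (P {b}) _ ▸ h a b hlt)
        fun heq => by rw [heq]
    rw [measure_eq_tsum_singleton_inter hT hP A, measure_eq_tsum_singleton_inter hT hP B,
      measure_eq_tsum_singleton_inter hT hQ A, measure_eq_tsum_singleton_inter hT hQ B]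
    simp_rw [← ENNReal.tsum_mul_left, ← ENNReal.tsum_mul_right]
    exact (ENNReal.tsum_le_tsum fun a : ↥(A ∩ T) => ENNReal.tsum_le_tsum fun b : ↥(B ∩ T) =>
      hpt a a.2.1 b b.2.1).trans_eq ENNReal.tsum_comm

section ConditionalLaw

variable {Ω α : Type*} [MeasurableSpace Ω] {μ : Measure Ω} {X : Ω → α} {Y : Ω → ℝ}

theorem measure_preimage_snd_image_compl_eq_zero [IsProbabilityMeasure μ] (hY : Measurable Y)
    {S : Set (α × ℝ)} (hS : S.Countable) (hsupp : μ {ω | (X ω, Y ω) ∈ S} = 1) :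
    μ (Y ⁻¹' (Prod.snd '' S)ᶜ) = 0 := by
  have hT : MeasurableSet (Y ⁻¹' (Prod.snd '' S)) := hY (hS.image _).measurableSet
  refine (prob_compl_eq_zero_iff hT).2 (le_antisymm prob_le_one ?_)
  exact hsupp ▸ measure_mono fun ω hω => ⟨(X ω, Y ω), hω, rfl⟩

theorem map_restrict_apply_singleton (hY : Measurable Y) (x : α) (y : ℝ) :
    (μ.restrict {ω | X ω = x}).map Y {y} = μ {ω | X ω = x ∧ Y ω = y} := by
  rw [Measure.map_apply hY (measurableSet_singleton y),
    Measure.restrict_apply (hY (measurableSet_singleton y))]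
  congr 1
  ext ω
  exact and_comm

theorem map_restrict_apply_eq_zero (hY : Measurable Y) {T : Set ℝ} (hT : MeasurableSet T)
    (hYT : μ (Y ⁻¹' T) = 0) (s : Set Ω) : (μ.restrict s).map Y T = 0 := by
  rw [Measure.map_apply hY hT]
  exact nonpos_iff_eq_zero.1 (hYT ▸ Measure.restrict_apply_le s _)

theorem isLR_cond_iff_of_countable [IsFiniteMeasure μ] (hY : Measurable Y) {T : Set ℝ}
    (hT : T.Countable) (hYT : μ (Y ⁻¹' Tᶜ) = 0) {x₁ x₂ : α} (h₁ : μ {ω | X ω = x₁} ≠ 0)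
    (h₂ : μ {ω | X ω = x₂} ≠ 0) :
    IsLR ((μ {ω | X ω = x₁})⁻¹ • (μ.restrict {ω | X ω = x₁}).map Y)
        ((μ {ω | X ω = x₂})⁻¹ • (μ.restrict {ω | X ω = x₂}).map Y) ↔
      ∀ y₁ y₂ : ℝ, y₁ < y₂ →
        μ {ω | X ω = x₂ ∧ Y ω = y₁} * μ {ω | X ω = x₁ ∧ Y ω = y₂} ≤
          μ {ω | X ω = x₁ ∧ Y ω = y₁} * μ {ω | X ω = x₂ ∧ Y ω = y₂} := by
  rw [isLR_smul_iff (ENNReal.inv_ne_zero.2 (measure_ne_top μ _)) (ENNReal.inv_ne_top.2 h₁)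
    (ENNReal.inv_ne_zero.2 (measure_ne_top μ _)) (ENNReal.inv_ne_top.2 h₂),
    isLR_iff_of_countable hT (map_restrict_apply_eq_zero hY hT.measurableSet.compl hYT _)
      (map_restrict_apply_eq_zero hY hT.measurableSet.compl hYT _)]
  simp only [map_restrict_apply_singleton hY]

end ConditionalLaw

theorem stmt9_general {Ω : Type*} [MeasurableSpace Ω] (μ : Measure Ω) [IsProbabilityMeasure μ]
    (X Y : Ω → ℝ) (hY : Measurable Y)
    (S : Set (ℝ × ℝ)) (hS : S.Countable) (hsupp : μ {ω | (X ω, Y ω) ∈ S} = 1) :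
    (∀ x₁ x₂ : ℝ, x₁ < x₂ → 0 < μ {ω | X ω = x₁} → 0 < μ {ω | X ω = x₂} →
      IsLR ((μ {ω | X ω = x₁})⁻¹ • (μ.restrict {ω | X ω = x₁}).map Y)
           ((μ {ω | X ω = x₂})⁻¹ • (μ.restrict {ω | X ω = x₂}).map Y)) ↔
    (∀ x₁ x₂ y₁ y₂ : ℝ, x₁ < x₂ → y₁ < y₂ →
      μ {ω | X ω = x₂ ∧ Y ω = y₁} * μ {ω | X ω = x₁ ∧ Y ω = y₂} ≤
        μ {ω | X ω = x₁ ∧ Y ω = y₁} * μ {ω | X ω = x₂ ∧ Y ω = y₂}) := by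
  have hYT := measure_preimage_snd_image_compl_eq_zero hY hS hsupp
  have hK := fun x₁ x₂ (h₁ : 0 < μ {ω | X ω = x₁}) (h₂ : 0 < μ {ω | X ω = x₂}) =>
    isLR_cond_iff_of_countable hY (hS.image Prod.snd) hYT h₁.ne' h₂.ne'
  constructor
  · intro hLR x₁ x₂ y₁ y₂ hx hy
    rcases eq_zero_or_pos (μ {ω | X ω = x₁}) with h₁ | h₁
    · simp [measure_mono_null (s := {ω | X ω = x₁ ∧ Y ω = y₂}) (fun ω hω => hω.1) h₁]
    rcases eq_zero_or_pos (μ {ω | X ω = x₂}) with h₂ | h₂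
    · simp [measure_mono_null (s := {ω | X ω = x₂ ∧ Y ω = y₁}) (fun ω hω => hω.1) h₂]
    exact (hK x₁ x₂ h₁ h₂).1 (hLR x₁ x₂ hx h₁ h₂) y₁ y₂ hy
  · intro hTP x₁ x₂ hx h₁ h₂
    exact (hK x₁ x₂ h₁ h₂).2 (hTP x₁ x₂ · · hx)

/-- **Corollary (discrete case).** If the pair `(X,Y)` has a discrete
(countably supported) distribution with probability mass function
`h(x,y) = P(X = x, Y = y)`, then the conditional distributions
`K(x,·) = L(Y | X = x)` are isotonic in `x` (over atoms of `X`) with respect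
to the likelihood ratio order iff `h` is totally positive of order two. -/
theorem stmt9 {Ω : Type*} [MeasurableSpace Ω] (μ : Measure Ω) [IsProbabilityMeasure μ]
    (X Y : Ω → ℝ) (hX : Measurable X) (hY : Measurable Y)
    (S : Set (ℝ × ℝ)) (hS : S.Countable) (hsupp : μ {ω | (X ω, Y ω) ∈ S} = 1) :
    (∀ x₁ x₂ : ℝ, x₁ < x₂ → 0 < μ {ω | X ω = x₁} → 0 < μ {ω | X ω = x₂} →
      IsLR ((μ {ω | X ω = x₁})⁻¹ • (μ.restrict {ω | X ω = x₁}).map Y)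
           ((μ {ω | X ω = x₂})⁻¹ • (μ.restrict {ω | X ω = x₂}).map Y)) ↔
    (∀ x₁ x₂ y₁ y₂ : ℝ, x₁ < x₂ → y₁ < y₂ →
      μ {ω | X ω = x₂ ∧ Y ω = y₁} * μ {ω | X ω = x₁ ∧ Y ω = y₂} ≤
        μ {ω | X ω = x₁ ∧ Y ω = y₁} * μ {ω | X ω = x₂ ∧ Y ω = y₂}) :=
  stmt9_general μ X Y hY S hS hsupp
end

section
/- Let R̂_emp be the empirical distribution of points (X₁,Y₁),…,(Xₙ,Yₙ) ∈ ℝ², and let R_* be a TP2 probability distribution on ℝ². Then a minimizer R̂ of the Kuiper distance ‖R − R̂_emp‖_K over all TP2 probability distributions R on ℝ² exists, and it satisfies ‖R̂ − R_*‖_K ≤ 2·‖R̂_emp − R_*‖_K. -/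
/-!
Round each coordinate up to the nearest data coordinate, saturating at the largest one. This
coordinatewise monotone map preserves TP2, fixes the empirical distribution, and does not increase
the Kuiper distance to it, because the preimage of a half-open interval is an increasing union of
half-open intervals. So the minimization may be restricted to TP2 probability measures on the
finite data grid: a compact set of weights on which the Kuiper distance is Lipschitz. The factor 2
is the triangle inequality combined with minimality tested against `R_*`.
-/

open MeasureTheory Set
open scoped ENNReal BigOperators

/-- A probability distribution `R` on `ℝ²` is totally positive of order two. -/
def IsTP2 (R : Measure (ℝ × ℝ)) : Prop :=
  ∀ A₁ A₂ B₁ B₂ : Set ℝ, MeasurableSet A₁ → MeasurableSet A₂ →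
    MeasurableSet B₁ → MeasurableSet B₂ →
    (∀ a₁ ∈ A₁, ∀ a₂ ∈ A₂, a₁ < a₂) → (∀ b₁ ∈ B₁, ∀ b₂ ∈ B₂, b₁ < b₂) →
    R (A₂ ×ˢ B₁) * R (A₁ ×ˢ B₂) ≤ R (A₁ ×ˢ B₁) * R (A₂ ×ˢ B₂)

/-- The Kuiper distance between two finite measures on `ℝ²`: the supremum of
the absolute differences of the measures of half-open rectangles. -/
noncomputable def kuiperDist (μ ν : Measure (ℝ × ℝ)) : ℝ :=
  sSup {d : ℝ | ∃ a₁ a₂ b₁ b₂ : ℝ, a₁ < a₂ ∧ b₁ < b₂ ∧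
    d = |(μ (Ioc a₁ a₂ ×ˢ Ioc b₁ b₂)).toReal - (ν (Ioc a₁ a₂ ×ˢ Ioc b₁ b₂)).toReal|}


open Filter Topology

theorem kuiperDist_le_of_forall {μ ν : Measure (ℝ × ℝ)} {c : ℝ}
    (h : ∀ a₁ a₂ b₁ b₂ : ℝ,
      |μ.real (Ioc a₁ a₂ ×ˢ Ioc b₁ b₂) - ν.real (Ioc a₁ a₂ ×ˢ Ioc b₁ b₂)| ≤ c) :
    kuiperDist μ ν ≤ c :=
  csSup_le ⟨_, 0, 1, 0, 1, one_pos, one_pos, rfl⟩ fun _ ⟨a₁, a₂, b₁, b₂, _, _, hd⟩ =>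
    hd ▸ h a₁ a₂ b₁ b₂

theorem kuiperDist_comm (μ ν : Measure (ℝ × ℝ)) : kuiperDist μ ν = kuiperDist ν μ := by
  simp only [kuiperDist, abs_sub_comm]

section FiniteMeasures

variable (μ ν ρ : Measure (ℝ × ℝ)) [IsFiniteMeasure μ] [IsFiniteMeasure ν] [IsFiniteMeasure ρ]

theorem bddAbove_kuiperDist_set : BddAbove {d : ℝ | ∃ a₁ a₂ b₁ b₂ : ℝ, a₁ < a₂ ∧ b₁ < b₂ ∧
    d = |(μ (Ioc a₁ a₂ ×ˢ Ioc b₁ b₂)).toReal - (ν (Ioc a₁ a₂ ×ˢ Ioc b₁ b₂)).toReal|} := by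
  refine ⟨μ.real univ + ν.real univ, ?_⟩
  rintro d ⟨a₁, a₂, b₁, b₂, -, -, rfl⟩
  refine (abs_sub _ _).trans ?_
  simp only [abs_of_nonneg ENNReal.toReal_nonneg]
  exact add_le_add (measureReal_mono (subset_univ _)) (measureReal_mono (subset_univ _))

theorem kuiperDist_nonneg : 0 ≤ kuiperDist μ ν :=
  (abs_nonneg _).trans (le_csSup (bddAbove_kuiperDist_set μ ν) ⟨0, 1, 0, 1, one_pos, one_pos, rfl⟩)

theorem abs_measureReal_sub_le_kuiperDist (a₁ a₂ b₁ b₂ : ℝ) :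
    |μ.real (Ioc a₁ a₂ ×ˢ Ioc b₁ b₂) - ν.real (Ioc a₁ a₂ ×ˢ Ioc b₁ b₂)| ≤ kuiperDist μ ν := by
  by_cases h : a₁ < a₂ ∧ b₁ < b₂
  · exact le_csSup (bddAbove_kuiperDist_set μ ν) ⟨a₁, a₂, b₁, b₂, h.1, h.2, rfl⟩
  · have hempty : Ioc a₁ a₂ ×ˢ Ioc b₁ b₂ = ∅ := by
      rw [prod_eq_empty_iff, Ioc_eq_empty_iff, Ioc_eq_empty_iff]; tauto
    simpa [hempty] using kuiperDist_nonneg μ ν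

theorem kuiperDist_triangle : kuiperDist μ ρ ≤ kuiperDist μ ν + kuiperDist ν ρ :=
  kuiperDist_le_of_forall fun _ _ _ _ => (abs_sub_le _ _ _).trans
    (add_le_add (abs_measureReal_sub_le_kuiperDist μ ν ..)
      (abs_measureReal_sub_le_kuiperDist ν ρ ..))

theorem abs_kuiperDist_sub_kuiperDist_le :
    |kuiperDist μ ρ - kuiperDist ν ρ| ≤ kuiperDist μ ν := by
  rw [abs_sub_le_iff]
  constructor
  · linarith [kuiperDist_triangle μ ν ρ]
  · linarith [kuiperDist_triangle ν μ ρ, kuiperDist_comm μ ν]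

end FiniteMeasures

def IsIocUnion (P : Set ℝ) : Prop :=
  ∃ a b : ℕ → ℝ, Antitone a ∧ Monotone b ∧ ⋃ k, Ioc (a k) (b k) = P

namespace IsIocUnion

theorem inter {P Q : Set ℝ} (hP : IsIocUnion P) (hQ : IsIocUnion Q) : IsIocUnion (P ∩ Q) := by
  obtain ⟨a, b, ha, hb, rfl⟩ := hP
  obtain ⟨c, d, hc, hd, rfl⟩ := hQ
  refine ⟨a ⊔ c, b ⊓ d, ha.sup hc, hb.inf hd, ?_⟩
  rw [← iUnion_inter_of_monotone (fun i j h => Ioc_subset_Ioc (ha h) (hb h))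
    (fun i j h => Ioc_subset_Ioc (hc h) (hd h))]
  simp only [Ioc_inter_Ioc, Pi.sup_apply, Pi.inf_apply]

theorem univ : IsIocUnion univ := by
  refine ⟨fun k => -k, fun k => k, fun i j h => by simpa using h, fun i j h => by simpa using h, ?_⟩
  refine iUnion_eq_univ_iff.2 fun x => ?_
  obtain ⟨k, hk⟩ := exists_nat_gt |x|
  exact ⟨k, by linarith [neg_abs_le x], by linarith [le_abs_self x]⟩

theorem Iic (d : ℝ) : IsIocUnion (Iic d) := by
  refine ⟨fun k => d - k, fun _ => d, fun _ _ h => sub_le_sub_left (Nat.mono_cast h) d,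
    monotone_const, ?_⟩
  ext x
  simp only [mem_iUnion, mem_Ioc, mem_Iic]
  refine ⟨fun ⟨_, _, hx⟩ => hx, fun hx => ?_⟩
  obtain ⟨k, hk⟩ := exists_nat_gt (d - x)
  exact ⟨k, by linarith, hx⟩

theorem Ioi (c : ℝ) : IsIocUnion (Ioi c) := by
  refine ⟨fun _ => c, fun k => c + k, antitone_const, fun i j h => by simpa using h, ?_⟩
  rw [iUnion_Ioc_eq_Ioi_self_iff]
  intro x _
  obtain ⟨k, hk⟩ := exists_nat_ge (x - c)
  exact ⟨k, by linarith⟩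

theorem empty : IsIocUnion ∅ :=
  ⟨0, 0, antitone_const, monotone_const, by simp⟩

end IsIocUnion

theorem abs_measureReal_sub_le_kuiperDist_of_isIocUnion (μ ν : Measure (ℝ × ℝ))
    [IsFiniteMeasure μ] [IsFiniteMeasure ν] {P Q : Set ℝ} (hP : IsIocUnion P) (hQ : IsIocUnion Q) :
    |μ.real (P ×ˢ Q) - ν.real (P ×ˢ Q)| ≤ kuiperDist μ ν := by
  obtain ⟨a, b, ha, hb, rfl⟩ := hP
  obtain ⟨c, d, hc, hd, rfl⟩ := hQ
  have hPmono : Monotone fun k => Ioc (a k) (b k) := fun i j h => Ioc_subset_Ioc (ha h) (hb h)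
  have hQmono : Monotone fun k => Ioc (c k) (d k) := fun i j h => Ioc_subset_Ioc (hc h) (hd h)
  rw [← iUnion_prod_of_monotone hPmono hQmono]
  have hlim (ρ : Measure (ℝ × ℝ)) [IsFiniteMeasure ρ] :
      Tendsto (fun k => ρ.real (Ioc (a k) (b k) ×ˢ Ioc (c k) (d k))) atTop
        (𝓝 (ρ.real (⋃ k, Ioc (a k) (b k) ×ˢ Ioc (c k) (d k)))) :=
    (ENNReal.tendsto_toReal (measure_ne_top _ _)).comp
      (tendsto_measure_iUnion_atTop fun i j h => prod_mono (hPmono h) (hQmono h))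
  exact le_of_tendsto ((hlim μ).sub (hlim ν)).abs
    (Eventually.of_forall fun k => abs_measureReal_sub_le_kuiperDist μ ν ..)

-- Rounds `x` up into `s`; the inserted `s.max' hs` catches the points above `s`.
noncomputable def snap (s : Finset ℝ) (hs : s.Nonempty) (x : ℝ) : ℝ :=
  (insert (s.max' hs) (s.filter (x ≤ ·))).min' (Finset.insert_nonempty _ _)

section Snap

variable {s : Finset ℝ} (hs : s.Nonempty)

theorem snap_mem (x : ℝ) : snap s hs x ∈ s := by
  unfold snap
  rcases Finset.mem_insert.1 (Finset.min'_mem _ (Finset.insert_nonempty (s.max' hs) _)) with h | h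
  · rw [h]; exact s.max'_mem hs
  · exact Finset.mem_of_mem_filter _ h

theorem snap_le_iff {x b : ℝ} : snap s hs x ≤ b ↔ s.max' hs ≤ b ∨ ∃ v ∈ s, x ≤ v ∧ v ≤ b := by
  simp [snap, Finset.min'_eq_inf', Finset.inf'_le_iff, and_assoc]

theorem snap_of_mem {v : ℝ} (hv : v ∈ s) : snap s hs v = v := by
  refine le_antisymm ((snap_le_iff hs).2 (Or.inr ⟨v, hv, le_rfl, le_rfl⟩)) ?_
  refine Finset.le_min' _ _ _ fun u hu => ?_
  rcases Finset.mem_insert.1 hu with rfl | hu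
  · exact s.le_max' v hv
  · exact (Finset.mem_filter.1 hu).2

theorem monotone_snap : Monotone (snap s hs) := fun x y hxy =>
  Finset.min'_subset _ <| Finset.insert_subset_insert _ fun _ hu => by
    rw [Finset.mem_filter] at hu ⊢
    exact ⟨hu.1, hxy.trans hu.2⟩

theorem snap_preimage_Iic (b : ℝ) :
    snap s hs ⁻¹' Iic b = univ ∨ snap s hs ⁻¹' Iic b = ∅ ∨ ∃ d, snap s hs ⁻¹' Iic b = Iic d := by
  by_cases hmax : s.max' hs ≤ b
  · exact Or.inl (eq_univ_of_forall fun x => (snap_le_iff hs).2 (Or.inl hmax))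
  by_cases ht : (s.filter (· ≤ b)).Nonempty
  · refine Or.inr (Or.inr ⟨(s.filter (· ≤ b)).max' ht, ?_⟩)
    ext x
    rw [mem_preimage, mem_Iic, snap_le_iff hs, or_iff_right hmax, mem_Iic, Finset.max'_eq_sup',
      Finset.le_sup'_iff]
    simp only [Finset.mem_filter, id]
    exact ⟨fun ⟨v, hv, hxv, hvb⟩ => ⟨v, ⟨hv, hvb⟩, hxv⟩,
      fun ⟨v, ⟨hv, hvb⟩, hxv⟩ => ⟨v, hv, hxv, hvb⟩⟩
  · refine Or.inr (Or.inl (eq_empty_of_forall_notMem fun x hx => ht ?_))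
    obtain ⟨v, hv, -, hvb⟩ := ((snap_le_iff hs).1 hx).resolve_left hmax
    exact ⟨v, Finset.mem_filter.2 ⟨hv, hvb⟩⟩

theorem isIocUnion_snap_preimage_Ioc (a b : ℝ) : IsIocUnion (snap s hs ⁻¹' Ioc a b) := by
  have hIic (c : ℝ) : IsIocUnion (snap s hs ⁻¹' Iic c) ∧ IsIocUnion (snap s hs ⁻¹' Iic c)ᶜ := by
    rcases snap_preimage_Iic hs c with h | h | ⟨d, h⟩ <;> rw [h]
    · exact ⟨.univ, by rw [compl_univ]; exact .empty⟩
    · exact ⟨.empty, by rw [compl_empty]; exact .univ⟩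
    · exact ⟨.Iic d, by rw [compl_Iic]; exact .Ioi d⟩
  rw [← Ioi_inter_Iic, preimage_inter, ← compl_Iic, preimage_compl]
  exact (hIic a).2.inter (hIic b).1

end Snap

theorem isTP2_map_prodMap {R : Measure (ℝ × ℝ)} (hR : IsTP2 R) {f g : ℝ → ℝ}
    (hf : Monotone f) (hg : Monotone g) : IsTP2 (R.map (Prod.map f g)) := by
  intro A₁ A₂ B₁ B₂ hA₁ hA₂ hB₁ hB₂ hA hB
  have hT : Measurable (Prod.map f g) := hf.measurable.prodMap hg.measurable
  have hmap {A B : Set ℝ} (hA : MeasurableSet A) (hB : MeasurableSet B) :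
      R.map (Prod.map f g) (A ×ˢ B) = R ((f ⁻¹' A) ×ˢ (g ⁻¹' B)) := by
    rw [Measure.map_apply hT (hA.prod hB), preimage_prod_map_prod]
  rw [hmap hA₂ hB₁, hmap hA₁ hB₂, hmap hA₁ hB₁, hmap hA₂ hB₂]
  refine hR _ _ _ _ (hf.measurable hA₁) (hf.measurable hA₂) (hg.measurable hB₁)
    (hg.measurable hB₂) (fun a₁ h₁ a₂ h₂ => ?_) (fun b₁ h₁ b₂ h₂ => ?_)
  · exact hf.reflect_lt (hA _ h₁ _ h₂)
  · exact hg.reflect_lt (hB _ h₁ _ h₂)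

theorem kuiperDist_map_prodMap_le {f g : ℝ → ℝ} (hf : Measurable f) (hg : Measurable g)
    (hfI : ∀ a b, IsIocUnion (f ⁻¹' Ioc a b)) (hgI : ∀ a b, IsIocUnion (g ⁻¹' Ioc a b))
    (μ ν : Measure (ℝ × ℝ)) [IsFiniteMeasure μ] [IsFiniteMeasure ν]
    (hν : ν.map (Prod.map f g) = ν) :
    kuiperDist (μ.map (Prod.map f g)) ν ≤ kuiperDist μ ν := by
  refine kuiperDist_le_of_forall fun a₁ a₂ b₁ b₂ => ?_
  have hQ : MeasurableSet (Ioc a₁ a₂ ×ˢ Ioc b₁ b₂) := measurableSet_Ioc.prod measurableSet_Ioc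
  have hpre (ρ : Measure (ℝ × ℝ)) : (ρ.map (Prod.map f g)).real (Ioc a₁ a₂ ×ˢ Ioc b₁ b₂) =
      ρ.real ((f ⁻¹' Ioc a₁ a₂) ×ˢ (g ⁻¹' Ioc b₁ b₂)) := by
    rw [map_measureReal_apply (hf.prodMap hg) hQ, preimage_prod_map_prod]
  rw [← hν, hpre, hpre, hν]
  exact abs_measureReal_sub_le_kuiperDist_of_isIocUnion μ ν (hfI a₁ a₂) (hgI b₁ b₂)

noncomputable def weightedDirac {ι α : Type*} [Fintype ι] [MeasurableSpace α] (e : ι → α)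
    (w : ι → ℝ) : Measure α :=
  ∑ i, (w i).toNNReal • Measure.dirac (e i)

section WeightedDirac

variable {ι α : Type*} [Fintype ι] [MeasurableSpace α]

instance (e : ι → α) (w : ι → ℝ) :
    IsFiniteMeasure (weightedDirac e w) := by
  unfold weightedDirac; infer_instance

theorem weightedDirac_real_apply (e : ι → α) (w : ι → ℝ)
    (E : Set α) : (weightedDirac e w).real E = ∑ i, max (w i) 0 * (Measure.dirac (e i)).real E := by
  rw [weightedDirac, measureReal_def, Measure.coe_finsetSum, Finset.sum_apply,
    ENNReal.toReal_sum fun i _ => measure_ne_top _ _]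
  simp [measureReal_def]

theorem isProbabilityMeasure_weightedDirac (e : ι → α)
    {w : ι → ℝ} (hw : w ∈ stdSimplex ℝ ι) : IsProbabilityMeasure (weightedDirac e w) := by
  rw [isProbabilityMeasure_iff_real, weightedDirac_real_apply]
  simpa [max_eq_left (hw.1 _)] using hw.2

theorem map_eq_weightedDirac [MeasurableSpace ι] [MeasurableSingletonClass ι] {e : ι → α} (he : Measurable e) (ν : Measure ι) [IsFiniteMeasure ν] :
    ν.map e = weightedDirac e fun i => ν.real {i} := by
  conv_lhs => rw [← Measure.sum_smul_dirac ν]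
  rw [Measure.map_sum he.aemeasurable, Measure.sum_fintype, weightedDirac]
  refine Finset.sum_congr rfl fun i _ => ?_
  rw [Measure.map_smul, Measure.map_dirac' he, measureReal_def, ENNReal.toReal, Real.toNNReal_coe,
    ENNReal.smul_def, ENNReal.coe_toNNReal (measure_ne_top ν {i})]

theorem measureReal_singleton_mem_stdSimplex [MeasurableSpace ι] [MeasurableSingletonClass ι]
    (ν : Measure ι) [IsProbabilityMeasure ν] : (fun i => ν.real {i}) ∈ stdSimplex ℝ ι :=
  ⟨fun _ => measureReal_nonneg, by simp [sum_measureReal_singleton]⟩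

end WeightedDirac

theorem isTP2_iff_measureReal {R : Measure (ℝ × ℝ)} [IsFiniteMeasure R] :
    IsTP2 R ↔ ∀ A₁ A₂ B₁ B₂ : Set ℝ, MeasurableSet A₁ → MeasurableSet A₂ →
      MeasurableSet B₁ → MeasurableSet B₂ →
      (∀ a₁ ∈ A₁, ∀ a₂ ∈ A₂, a₁ < a₂) → (∀ b₁ ∈ B₁, ∀ b₂ ∈ B₂, b₁ < b₂) →
      R.real (A₂ ×ˢ B₁) * R.real (A₁ ×ˢ B₂) ≤ R.real (A₁ ×ˢ B₁) * R.real (A₂ ×ˢ B₂) := by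
  simp only [IsTP2, measureReal_def, ← ENNReal.toReal_mul,
    ENNReal.toReal_le_toReal (ENNReal.mul_ne_top (measure_ne_top R _) (measure_ne_top R _))
      (ENNReal.mul_ne_top (measure_ne_top R _) (measure_ne_top R _))]

section WeightedDiracOnPlane

variable {ι : Type*} [Fintype ι] (e : ι → ℝ × ℝ)

theorem kuiperDist_weightedDirac_le (w w' : ι → ℝ) :
    kuiperDist (weightedDirac e w) (weightedDirac e w') ≤ Fintype.card ι * dist w w' := by
  refine kuiperDist_le_of_forall fun a₁ a₂ b₁ b₂ => ?_
  rw [weightedDirac_real_apply, weightedDirac_real_apply, ← Finset.sum_sub_distrib]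
  calc _ ≤ ∑ i, |max (w i) 0 * (Measure.dirac (e i)).real (Ioc a₁ a₂ ×ˢ Ioc b₁ b₂) -
          max (w' i) 0 * (Measure.dirac (e i)).real (Ioc a₁ a₂ ×ˢ Ioc b₁ b₂)| :=
        Finset.abs_sum_le_sum_abs _ _
    _ ≤ ∑ _i : ι, dist w w' := Finset.sum_le_sum fun i _ => by
        rw [← sub_mul, abs_mul, abs_of_nonneg measureReal_nonneg]
        calc _ ≤ |w i - w' i| * 1 :=
              mul_le_mul (abs_max_sub_max_le_abs _ _ _) measureReal_le_one measureReal_nonneg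
                (abs_nonneg _)
          _ ≤ dist w w' := by rw [mul_one, ← Real.dist_eq]; exact dist_le_pi_dist w w' i
    _ = Fintype.card ι * dist w w' := by simp

theorem continuous_kuiperDist_weightedDirac (ν : Measure (ℝ × ℝ)) [IsFiniteMeasure ν] :
    Continuous fun w => kuiperDist (weightedDirac e w) ν := by
  refine (LipschitzWith.of_dist_le_mul (K := Fintype.card ι) fun w w' => ?_).continuous
  rw [Real.dist_eq, NNReal.coe_natCast]
  exact (abs_kuiperDist_sub_kuiperDist_le _ _ ν).trans (kuiperDist_weightedDirac_le e w w')

theorem isClosed_setOf_isTP2_weightedDirac : IsClosed {w : ι → ℝ | IsTP2 (weightedDirac e w)} := by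
  have hcont (E : Set (ℝ × ℝ)) : Continuous fun w => (weightedDirac e w).real E := by
    simp only [weightedDirac_real_apply]
    fun_prop
  simp only [isTP2_iff_measureReal, ofPred_forall]
  repeat refine isClosed_iInter fun _ => ?_
  exact isClosed_le ((hcont _).mul (hcont _)) ((hcont _).mul (hcont _))

theorem exists_isMinOn_kuiperDist_weightedDirac (ν : Measure (ℝ × ℝ)) [IsFiniteMeasure ν]
    (hne : (stdSimplex ℝ ι ∩ {w | IsTP2 (weightedDirac e w)}).Nonempty) :
    ∃ w₀ ∈ stdSimplex ℝ ι ∩ {w | IsTP2 (weightedDirac e w)},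
      IsMinOn (fun w => kuiperDist (weightedDirac e w) ν)
        (stdSimplex ℝ ι ∩ {w | IsTP2 (weightedDirac e w)}) w₀ :=
  ((isCompact_stdSimplex ℝ ι).inter_right (isClosed_setOf_isTP2_weightedDirac e)).exists_isMinOn hne
    (continuous_kuiperDist_weightedDirac e ν).continuousOn

end WeightedDiracOnPlane

theorem kuiperDist_le_two_mul_of_le {μ ν ρ : Measure (ℝ × ℝ)} [IsFiniteMeasure μ]
    [IsFiniteMeasure ν] [IsFiniteMeasure ρ] (h : kuiperDist μ ν ≤ kuiperDist ρ ν) :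
    kuiperDist μ ρ ≤ 2 * kuiperDist ν ρ := by
  linarith [kuiperDist_triangle μ ν ρ, kuiperDist_comm ρ ν]

theorem map_smul_sum_dirac_of_fixed {n : ℕ} (c : ℝ≥0∞) (pts : Fin n → ℝ × ℝ)
    {T : ℝ × ℝ → ℝ × ℝ} (hT : Measurable T) (hfix : ∀ i, T (pts i) = pts i) :
    (c • ∑ i, Measure.dirac (pts i)).map T = c • ∑ i, Measure.dirac (pts i) := by
  simp [Measure.map_smul, Measure.map_finset_sum hT.aemeasurable, Measure.map_dirac' hT, hfix]

theorem exists_weightedDirac_kuiperDist_le {s t : Finset ℝ} (hs : s.Nonempty) (ht : t.Nonempty)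
    (ν : Measure (ℝ × ℝ)) [IsFiniteMeasure ν]
    (hν : ν.map (Prod.map (snap s hs) (snap t ht)) = ν)
    (R : Measure (ℝ × ℝ)) [IsProbabilityMeasure R] (hR : IsTP2 R) :
    ∃ w ∈ stdSimplex ℝ (s × t) ∩
        {w | IsTP2 (weightedDirac (Prod.map Subtype.val Subtype.val) w)},
      kuiperDist (weightedDirac (Prod.map Subtype.val Subtype.val) w) ν ≤ kuiperDist R ν := by
  set T' : ℝ × ℝ → s × t := Prod.map (fun x => ⟨snap s hs x, snap_mem hs x⟩)
    (fun y => ⟨snap t ht y, snap_mem ht y⟩)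
  have hT' : Measurable T' :=
    (monotone_snap hs).measurable.subtype_mk.prodMap (monotone_snap ht).measurable.subtype_mk
  have he : Measurable (Prod.map Subtype.val Subtype.val : s × t → ℝ × ℝ) :=
    measurable_subtype_coe.prodMap measurable_subtype_coe
  have : IsProbabilityMeasure (R.map T') := Measure.isProbabilityMeasure_map hT'.aemeasurable
  have hmap : R.map (Prod.map (snap s hs) (snap t ht)) =
      weightedDirac (Prod.map Subtype.val Subtype.val) fun i => (R.map T').real {i} := by
    rw [← map_eq_weightedDirac he, Measure.map_map he hT']
    rfl
  refine ⟨_, ⟨measureReal_singleton_mem_stdSimplex (R.map T'), ?_⟩, ?_⟩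
  · rw [mem_ofPred_eq, ← hmap]
    exact isTP2_map_prodMap hR (monotone_snap hs) (monotone_snap ht)
  · rw [← hmap]
    exact kuiperDist_map_prodMap_le (monotone_snap hs).measurable (monotone_snap ht).measurable
      (isIocUnion_snap_preimage_Ioc hs) (isIocUnion_snap_preimage_Ioc ht) R ν hν

/-- **Lemma (minimum Kuiper distance estimator).** A minimizer `R̂` of the
Kuiper distance to the empirical distribution over all TP2 probability
distributions on `ℝ²` exists, and it satisfies
`‖R̂ − R_*‖_K ≤ 2 ‖R̂_emp − R_*‖_K` for any TP2 probability measure `R_*`. -/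
theorem stmt14 (n : ℕ) (hn : 0 < n) (pts : Fin n → ℝ × ℝ)
    (Remp : Measure (ℝ × ℝ))
    (hRemp : Remp = (n : ℝ≥0∞)⁻¹ • ∑ i : Fin n, Measure.dirac (pts i))
    (Rstar : Measure (ℝ × ℝ)) [IsProbabilityMeasure Rstar] (hstar : IsTP2 Rstar) :
    ∃ Rhat : Measure (ℝ × ℝ), IsProbabilityMeasure Rhat ∧ IsTP2 Rhat ∧
      (∀ R : Measure (ℝ × ℝ), IsProbabilityMeasure R → IsTP2 R →
        kuiperDist Rhat Remp ≤ kuiperDist R Remp) ∧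
      kuiperDist Rhat Rstar ≤ 2 * kuiperDist Remp Rstar := by
  have : NeZero n := ⟨hn.ne'⟩
  have : IsFiniteMeasure Remp :=
    hRemp ▸ Measure.smul_finite _ (ENNReal.inv_ne_top.2 (Nat.cast_ne_zero.2 hn.ne'))
  set xs := Finset.univ.image fun i => (pts i).1
  set ys := Finset.univ.image fun i => (pts i).2
  have hxs : xs.Nonempty := Finset.univ_nonempty.image _
  have hys : ys.Nonempty := Finset.univ_nonempty.image _
  have hRemp_map : Remp.map (Prod.map (snap xs hxs) (snap ys hys)) = Remp :=
    hRemp ▸ map_smul_sum_dirac_of_fixed _ pts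
      ((monotone_snap hxs).measurable.prodMap (monotone_snap hys).measurable) fun i =>
        Prod.ext (snap_of_mem hxs (Finset.mem_image_of_mem _ (Finset.mem_univ i)))
          (snap_of_mem hys (Finset.mem_image_of_mem _ (Finset.mem_univ i)))
  have hreduce := exists_weightedDirac_kuiperDist_le hxs hys Remp hRemp_map
  set e : xs × ys → ℝ × ℝ := Prod.map Subtype.val Subtype.val
  obtain ⟨w₀, hw₀, hmin⟩ := exists_isMinOn_kuiperDist_weightedDirac e Remp
    (let ⟨w, hw, _⟩ := hreduce Rstar hstar; ⟨w, hw⟩)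
  have hopt (R : Measure (ℝ × ℝ)) (_ : IsProbabilityMeasure R) (hR : IsTP2 R) :
      kuiperDist (weightedDirac e w₀) Remp ≤ kuiperDist R Remp :=
    let ⟨_, hw, hle⟩ := hreduce R hR
    (hmin hw).trans hle
  have := isProbabilityMeasure_weightedDirac e hw₀.1
  exact ⟨_, inferInstance, hw₀.2, hopt, kuiperDist_le_two_mul_of_le (hopt Rstar ‹_› hstar)⟩
end

section
/- Let Q₀ and Q₁ be Borel probability measures on ℝ with Q₀ ≤lr Q₁, and for t ∈ [0,1] define the mixture Q_t := (1−t)·Q₀ + t·Q₁. Then Q_s ≤lr Q_t for all 0 ≤ s < t ≤ 1. -/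
/-! For mixtures `a P + b Q` and `c P + d Q`, expanding both cross products shows that their
difference is `(a d - b c) (P A Q B - P B Q A)`: the second factor is nonnegative when
`P ≤lr Q`, and the first is `t - s ≥ 0` for the interpolating coefficients. -/

open MeasureTheory Set
open scoped ENNReal

theorem mixture_cross_mul_le {R : Type*} [CommSemiring R] [PartialOrder R]
    [CanonicallyOrderedAdd R] [IsOrderedRing R] {a b c d p₀ p₁ q₀ q₁ : R}
    (hpq : p₁ * q₀ ≤ p₀ * q₁) (hcoef : b * c ≤ a * d) :
    (a * p₁ + b * q₁) * (c * p₀ + d * q₀) ≤ (a * p₀ + b * q₀) * (c * p₁ + d * q₁) := by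
  obtain ⟨e, had⟩ := exists_add_of_le hcoef
  set S := a * c * (p₀ * p₁) + b * d * (q₀ * q₁) + b * c * (p₁ * q₀ + p₀ * q₁)
  calc (a * p₁ + b * q₁) * (c * p₀ + d * q₀)
      = a * c * (p₀ * p₁) + a * d * (p₁ * q₀) + b * c * (p₀ * q₁) + b * d * (q₀ * q₁) := by ring
    _ = S + e * (p₁ * q₀) := by rw [had]; ring
    _ ≤ S + e * (p₀ * q₁) := by gcongr
    _ = a * c * (p₀ * p₁) + a * d * (p₀ * q₁) + b * c * (p₁ * q₀) + b * d * (q₀ * q₁) := by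
      rw [had]; ring
    _ = (a * p₀ + b * q₀) * (c * p₁ + d * q₁) := by ring

theorem IsLR.smul_add_smul {P Q : Measure ℝ} (h : IsLR P Q) {a b c d : ℝ≥0∞}
    (hcoef : b * c ≤ a * d) : IsLR (a • P + b • Q) (c • P + d • Q) := by
  intro A B hA hB hAB
  simp only [Measure.add_apply, Measure.smul_apply, smul_eq_mul]
  exact mixture_cross_mul_le (h A B hA hB hAB) hcoef

theorem stmt16_general (Q₀ Q₁ : Measure ℝ)
    (h : IsLR Q₀ Q₁) (s t : ℝ) (hs : 0 ≤ s) (hst : s < t) (ht : t ≤ 1) :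
    IsLR (ENNReal.ofReal (1 - s) • Q₀ + ENNReal.ofReal s • Q₁)
         (ENNReal.ofReal (1 - t) • Q₀ + ENNReal.ofReal t • Q₁) := by
  refine h.smul_add_smul ?_
  rw [← ENNReal.ofReal_mul hs, ← ENNReal.ofReal_mul (by linarith)]
  exact ENNReal.ofReal_le_ofReal (by linarith)

/-- **Lemma (linear interpolation preserves lr-order).** If `Q₀ ≤lr Q₁` and
`Q_t = (1−t) Q₀ + t Q₁`, then `Q_s ≤lr Q_t` whenever `0 ≤ s < t ≤ 1`. -/
theorem stmt16 (Q₀ Q₁ : Measure ℝ) [IsProbabilityMeasure Q₀] [IsProbabilityMeasure Q₁]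
    (h : IsLR Q₀ Q₁) (s t : ℝ) (hs : 0 ≤ s) (hst : s < t) (ht : t ≤ 1) :
    IsLR (ENNReal.ofReal (1 - s) • Q₀ + ENNReal.ofReal s • Q₁)
         (ENNReal.ofReal (1 - t) • Q₀ + ENNReal.ofReal t • Q₁) :=
  stmt16_general Q₀ Q₁ h s t hs hst ht
end

section
/- Let f : ℝ^d → ℝ be strictly convex and differentiable, let Θ ⊆ ℝ^d be closed and convex, and assume the minimizer θ̂ of f over Θ exists. Fix θ₀ ∈ Θ and a nonsingular matrix A ∈ ℝ^{d×d}, define the quadratic approximation f₀(x) := f(θ₀) + ∇f(θ₀)ᵀ(x − θ₀) + (1/2)·‖A x − A θ₀‖², let θ_* be the unique minimizer of f₀ over Θ, and set δ₀ := ∇f(θ₀)ᵀ(θ₀ − θ_*). Then: θ_* = θ₀ if and only if θ₀ = θ̂; moreover δ₀/2 ≤ f₀(θ₀) − f₀(θ_*) ≤ δ₀; and f(θ₀) − f(θ̂) ≤ ∇f(θ₀)ᵀ(θ₀ − θ̂) ≤ max(2δ₀, √(2δ₀)·‖A θ̂ − A θ₀‖). In addition, if f is twice differentiable and there is c₀ >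 0 with (d²/dt²) f((1−t)θ₀ + t θ_*) ≤ c₀·‖θ₀ − θ_*‖² for all t ∈ [0,1], then in case θ₀ ≠ θ̂, max_{t∈[0,1]} ( f(θ₀) − f((1−t)θ₀ + t θ_*) ) ≥ (1/2)·min( δ₀, δ₀²/(c₀·‖θ₀ − θ_*‖²) ). -/
/-!
Write `L` for the linear map of `A`. Everything rests on the first-order optimality condition of
the quadratic model at its minimizer `θ_*` over the convex set `Θ`:
`⟪∇f(θ₀), θ - θ_*⟫ + ⟪L(θ_* - θ₀), L(θ - θ_*)⟫ ≥ 0` for `θ ∈ Θ`. At `θ = θ₀` it gives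
`‖L(θ_* - θ₀)‖² ≤ δ₀`, hence the two-sided bound on the model decrease
`f₀(θ₀) - f₀(θ_*) = δ₀ - ‖L(θ_* - θ₀)‖²/2`. Comparing `f₀(θ_*)` with `f₀` along the segment from
`θ₀` to `θ̂` bounds `t ⟪∇f(θ₀), θ₀ - θ̂⟫` by `δ₀ + t² ‖L(θ̂ - θ₀)‖²/2` for `t ∈ [0, 1]`, and
choosing `t` well gives the max-bound. Since `L` is injective, `θ_* = θ₀` exactly when `θ₀`
satisfies the first-order condition for `f` on `Θ`, i.e. (by convexity) when `θ₀` minimizes `f`,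
i.e. (by strict convexity) when `θ₀ = θ̂`. Finally the second-derivative bound `c` along
`[θ₀, θ_*]` gives `f ≤ f(θ₀) - δ₀ t + c t²/2` there, which is optimized at `t = min(1, δ₀/c)`.
-/

open Set Filter Topology
open scoped RealInnerProductSpace

lemma nonneg_of_forall_mul_add_sq_mul_nonneg {b c : ℝ}
    (h : ∀ t ∈ Ioc (0 : ℝ) 1, 0 ≤ t * b + t ^ 2 * c) : 0 ≤ b := by
  have hlim : Tendsto (fun t : ℝ => b + t * c) (𝓝[>] 0) (𝓝 b) := by
    have : Tendsto (fun t : ℝ => b + t * c) (𝓝 0) (𝓝 (b + 0 * c)) :=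
      tendsto_const_nhds.add (tendsto_id.mul_const c)
    simpa using this.mono_left nhdsWithin_le_nhds
  refine ge_of_tendsto hlim ?_
  filter_upwards [Ioc_mem_nhdsGT zero_lt_one] with t ht
  have := h t ht
  rw [show t * b + t ^ 2 * c = t * (b + t * c) by ring] at this
  exact (mul_nonneg_iff_of_pos_left ht.1).mp this

lemma le_max_of_forall_mul_le {b δ n : ℝ} (hn : 0 ≤ n)
    (h : ∀ t ∈ Icc (0 : ℝ) 1, t * b ≤ δ + t ^ 2 / 2 * n ^ 2) :
    b ≤ max (2 * δ) (√(2 * δ) * n) := by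
  by_contra! hb
  obtain ⟨hδb, hsqrt⟩ := max_lt_iff.mp hb
  have hb0 : 0 < b := lt_of_le_of_lt (by positivity) hsqrt
  rcases le_or_gt b (n ^ 2) with hbn | hnb
  · have hn2 : 0 < n ^ 2 := hb0.trans_le hbn
    have hstep := h (b / n ^ 2) ⟨by positivity, div_le_one_of_le₀ hbn hn2.le⟩
    have hb2 : b ^ 2 ≤ 2 * δ * n ^ 2 := by
      refine (div_le_iff₀ hn2).mp ?_
      have hsq : b / n ^ 2 * b = b ^ 2 / n ^ 2 := by ring
      have hsq' : (b / n ^ 2) ^ 2 / 2 * n ^ 2 = b ^ 2 / n ^ 2 / 2 := by field_simp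
      linarith
    have : b ≤ √(2 * δ) * n := by
      rw [← Real.sqrt_sq hn, ← Real.sqrt_mul' _ (sq_nonneg n)]
      exact (Real.le_sqrt hb0.le (by nlinarith)).mpr hb2
    linarith
  · linarith [h 1 ⟨zero_le_one, le_rfl⟩]

lemma exists_mem_Icc_half_min_le {δ c : ℝ} (hδ : 0 ≤ δ) (hc : 0 ≤ c) :
    ∃ t ∈ Icc (0 : ℝ) 1, 1 / 2 * min δ (δ ^ 2 / c) ≤ δ * t - c / 2 * t ^ 2 := by
  rcases le_total δ c with hδc | hcδ
  · refine ⟨δ / c, ⟨by positivity, div_le_one_of_le₀ hδc hc⟩, ?_⟩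
    calc 1 / 2 * min δ (δ ^ 2 / c) ≤ 1 / 2 * (δ ^ 2 / c) := by gcongr; exact min_le_right _ _
      _ = δ * (δ / c) - c / 2 * (δ / c) ^ 2 := by
        rcases hc.eq_or_lt with rfl | hc
        · simp
        · field_simp; ring
  · exact ⟨1, ⟨zero_le_one, le_rfl⟩, by nlinarith [min_le_left δ (δ ^ 2 / c)]⟩

lemma le_add_deriv_mul_add_of_deriv_deriv_le {φ : ℝ → ℝ} {a b c : ℝ} (hφ : Differentiable ℝ φ)
    (hφ' : Differentiable ℝ (deriv φ)) (h : ∀ t ∈ Icc a b, deriv (deriv φ) t ≤ c)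
    {t : ℝ} (ht : t ∈ Icc a b) :
    φ t ≤ φ a + deriv φ a * (t - a) + c / 2 * (t - a) ^ 2 := by
  set ψ' : ℝ → ℝ := fun s => deriv φ a + c * (s - a) - deriv φ s
  set ψ : ℝ → ℝ := fun s => φ a + deriv φ a * (s - a) + c / 2 * (s - a) ^ 2 - φ s
  have hψ' : ∀ s, HasDerivAt ψ' (c - deriv (deriv φ) s) s := fun s => by
    simpa using ((((hasDerivAt_id s).sub_const a).const_mul c).const_add (deriv φ a)).fun_sub
      (hφ' s).hasDerivAt
  have hψ : ∀ s, HasDerivAt ψ (ψ' s) s := fun s => by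
    have hsq : HasDerivAt (fun s => (s - a) ^ 2) (2 * (s - a)) s := by
      simpa using ((hasDerivAt_id s).sub_const a).fun_pow 2
    refine (((((hasDerivAt_id s).sub_const a).const_mul (deriv φ a)).const_add (φ a)).fun_add
      (hsq.const_mul (c / 2))).fun_sub (hφ s).hasDerivAt |>.congr_deriv ?_
    simp only [ψ']
    ring
  have hab : a ∈ Icc a b := left_mem_Icc.mpr (ht.1.trans ht.2)
  have hψ'_nonneg : ∀ s ∈ Icc a b, 0 ≤ ψ' s := by
    have hmono : MonotoneOn ψ' (Icc a b) :=
      monotoneOn_of_hasDerivWithinAt_nonneg (convex_Icc a b)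
        (fun s _ => (hψ' s).continuousAt.continuousWithinAt) (fun s _ => (hψ' s).hasDerivWithinAt)
        (fun s hs => sub_nonneg.mpr (h s (interior_subset hs)))
    intro s hs
    simpa [ψ'] using hmono hab hs hs.1
  have hmono : MonotoneOn ψ (Icc a b) :=
    monotoneOn_of_hasDerivWithinAt_nonneg (convex_Icc a b)
      (fun s _ => (hψ s).continuousAt.continuousWithinAt) (fun s _ => (hψ s).hasDerivWithinAt)
      (fun s hs => hψ'_nonneg s (interior_subset hs))
  simpa [ψ] using hmono hab ht ht.1

section Gradient

variable {E : Type*} [NormedAddCommGroup E] [InnerProductSpace ℝ E] [CompleteSpace E]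
  {f : E → ℝ} {s : Set E} {x y : E}

lemma DifferentiableAt.hasDerivAt_comp_lineMap (hf : DifferentiableAt ℝ f x) (y : E) :
    HasDerivAt (fun t : ℝ => f (AffineMap.lineMap x y t)) ⟪gradient f x, y - x⟫ 0 := by
  have := hf.hasGradientAt.hasFDerivAt.comp_hasDerivAt_of_eq (0 : ℝ)
    (AffineMap.hasDerivAt_lineMap (a := x) (b := y) (x := 0))
    (AffineMap.lineMap_apply_zero x y).symm
  simpa [Function.comp_def, InnerProductSpace.toDual_apply_apply] using this

lemma ConvexOn.add_inner_gradient_le (hf : ConvexOn ℝ s f) (hx : x ∈ s) (hy : y ∈ s)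
    (hfx : DifferentiableAt ℝ f x) : f x + ⟪gradient f x, y - x⟫ ≤ f y := by
  have hline := hf.comp_affineMap (AffineMap.lineMap x y)
  have := hline.le_slope_of_hasDerivAt (x := 0) (y := 1) (by simpa using hx) (by simpa using hy)
    zero_lt_one (hfx.hasDerivAt_comp_lineMap y)
  simp only [slope_def_field, Function.comp_apply, AffineMap.lineMap_apply_one,
    AffineMap.lineMap_apply_zero, sub_zero, div_one] at this
  linarith

lemma IsMinOn.inner_gradient_nonneg (hmin : IsMinOn f s x) (hs : Convex ℝ s) (hx : x ∈ s)
    (hy : y ∈ s) (hfx : DifferentiableAt ℝ f x) : 0 ≤ ⟪gradient f x, y - x⟫ := by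
  simpa [gradient, InnerProductSpace.toDual_symm_apply] using
    hmin.localize.hasFDerivWithinAt_nonneg hfx.hasFDerivAt.hasFDerivWithinAt
      (sub_mem_posTangentConeAt_of_segment_subset (hs.segment_subset hx hy))

lemma ConvexOn.isMinOn_iff_inner_gradient_nonneg (hf : ConvexOn ℝ s f) (hx : x ∈ s)
    (hfx : DifferentiableAt ℝ f x) : IsMinOn f s x ↔ ∀ y ∈ s, 0 ≤ ⟪gradient f x, y - x⟫ :=
  ⟨fun hmin _ hy => hmin.inner_gradient_nonneg hf.1 hx hy hfx, fun h => isMinOn_iff.mpr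
    fun y hy => by linarith [hf.add_inner_gradient_le hx hy hfx, h y hy]⟩

end Gradient

section QuadraticModel

variable {E F : Type*} [NormedAddCommGroup E] [InnerProductSpace ℝ E] [NormedAddCommGroup F]
  [InnerProductSpace ℝ F] {c : ℝ} {g x₀ xs y : E} {L : E →ₗ[ℝ] F} {Θ : Set E}

variable (c g x₀ L) in
noncomputable def quadraticModel (x : E) : ℝ := c + ⟪g, x - x₀⟫ + 1 / 2 * ‖L x - L x₀‖ ^ 2

lemma quadraticModel_add_smul (a w : E) (t : ℝ) :
    quadraticModel c g x₀ L (a + t • w) = quadraticModel c g x₀ L a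
      + t * (⟪g, w⟫ + ⟪L a - L x₀, L w⟫) + t ^ 2 / 2 * ‖L w‖ ^ 2 := by
  simp only [quadraticModel, map_add, map_smul]
  rw [show a + t • w - x₀ = (a - x₀) + t • w by abel,
    show L a + t • L w - L x₀ = (L a - L x₀) + t • L w by abel, inner_add_right,
    real_inner_smul_right, norm_add_sq_real, real_inner_smul_right, norm_smul, Real.norm_eq_abs,
    mul_pow, sq_abs]
  ring

lemma quadraticModel_self_sub (x : E) :
    quadraticModel c g x₀ L x₀ - quadraticModel c g x₀ L x =
      ⟪g, x₀ - x⟫ - 1 / 2 * ‖L x - L x₀‖ ^ 2 := by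
  simp only [quadraticModel, sub_self, inner_zero_right, norm_zero, inner_sub_right]
  ring

lemma IsMinOn.quadraticModel_inner_nonneg (hmin : IsMinOn (quadraticModel c g x₀ L) Θ xs)
    (hΘ : Convex ℝ Θ) (hxs : xs ∈ Θ) (hy : y ∈ Θ) :
    0 ≤ ⟪g, y - xs⟫ + ⟪L xs - L x₀, L (y - xs)⟫ := by
  refine nonneg_of_forall_mul_add_sq_mul_nonneg (c := ‖L (y - xs)‖ ^ 2 / 2) fun t ht => ?_
  have := isMinOn_iff.mp hmin _ (hΘ.add_smul_sub_mem hxs hy (Ioc_subset_Icc_self ht))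
  rw [quadraticModel_add_smul] at this
  linarith

lemma IsMinOn.norm_sq_le_inner (hmin : IsMinOn (quadraticModel c g x₀ L) Θ xs)
    (hΘ : Convex ℝ Θ) (hxs : xs ∈ Θ) (hx₀ : x₀ ∈ Θ) : ‖L xs - L x₀‖ ^ 2 ≤ ⟪g, x₀ - xs⟫ := by
  have := hmin.quadraticModel_inner_nonneg hΘ hxs hx₀
  rwa [map_sub, ← neg_sub (L xs), inner_neg_right, real_inner_self_eq_norm_sq, ← sub_eq_add_neg,
    sub_nonneg] at this

lemma inner_sub_le_max_of_isMinOn_quadraticModel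
    (hmin : IsMinOn (quadraticModel c g x₀ L) Θ xs) (hΘ : Convex ℝ Θ) (hx₀ : x₀ ∈ Θ) (hy : y ∈ Θ) :
    ⟪g, x₀ - y⟫ ≤ max (2 * ⟪g, x₀ - xs⟫) (√(2 * ⟪g, x₀ - xs⟫) * ‖L y - L x₀‖) := by
  refine le_max_of_forall_mul_le (norm_nonneg _) fun t ht => ?_
  have hstep := isMinOn_iff.mp hmin _ (hΘ.add_smul_sub_mem hx₀ hy ht)
  rw [quadraticModel_add_smul, sub_self, inner_zero_left, add_zero, map_sub] at hstep
  have hgap := quadraticModel_self_sub (c := c) (g := g) (x₀ := x₀) (L := L) xs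
  rw [← neg_sub x₀ y, inner_neg_right] at hstep
  linarith [sq_nonneg ‖L xs - L x₀‖]

lemma IsMinOn.eq_iff_inner_nonneg (hmin : IsMinOn (quadraticModel c g x₀ L) Θ xs)
    (hΘ : Convex ℝ Θ) (hxs : xs ∈ Θ) (hx₀ : x₀ ∈ Θ) (hL : Function.Injective L) :
    xs = x₀ ↔ ∀ y ∈ Θ, 0 ≤ ⟪g, y - x₀⟫ := by
  refine ⟨?_, fun h => ?_⟩
  · rintro rfl y hy
    simpa using hmin.quadraticModel_inner_nonneg hΘ hxs hy
  · have hle := isMinOn_iff.mp hmin x₀ hx₀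
    have hgap := quadraticModel_self_sub (c := c) (g := g) (x₀ := x₀) (L := L) xs
    have hneg : ⟪g, xs - x₀⟫ = -⟪g, x₀ - xs⟫ := by rw [← inner_neg_right, neg_sub]
    have hzero : ‖L xs - L x₀‖ ^ 2 ≤ 0 := by linarith [h xs hxs]
    exact hL (sub_eq_zero.mp (norm_eq_zero.mp (pow_eq_zero_iff two_ne_zero |>.mp
      (le_antisymm hzero (sq_nonneg _)))))

end QuadraticModel

lemma ContDiff.apply_lineMap_le_of_deriv_deriv_le {E : Type*} [NormedAddCommGroup E]
    [InnerProductSpace ℝ E] [CompleteSpace E] {f : E → ℝ} (hf : ContDiff ℝ 2 f) {x y : E} {C : ℝ}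
    (h : ∀ t ∈ Icc (0 : ℝ) 1, deriv (deriv fun u => f (AffineMap.lineMap x y u)) t ≤ C)
    {t : ℝ} (ht : t ∈ Icc 0 1) :
    f (AffineMap.lineMap x y t) ≤ f x + t * ⟪gradient f x, y - x⟫ + C / 2 * t ^ 2 := by
  have hφ : ContDiff ℝ 2 fun u => f (AffineMap.lineMap x y u) :=
    hf.comp (AffineMap.contDiff_lineMap x y)
  have hφ' := (contDiff_succ_iff_deriv (n := 1)).mp hφ
  have hφ'0 := ((hf.differentiable two_ne_zero) x).hasDerivAt_comp_lineMap y
  simpa [hφ'0.deriv, mul_comm] using le_add_deriv_mul_add_of_deriv_deriv_le hφ'.1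
    (hφ'.2.2.differentiable one_ne_zero) h ht

lemma Matrix.toEuclideanLin_injective {n : Type*} [Fintype n] [DecidableEq n]
    {A : Matrix n n ℝ} (hA : A.det ≠ 0) : Function.Injective (Matrix.toEuclideanLin A) := by
  intro v w h
  exact WithLp.ofLp_injective 2 <| Matrix.mulVec_injective_iff_isUnit.mpr
    ((Matrix.isUnit_iff_isUnit_det A).mpr hA.isUnit) (congrArg WithLp.ofLp h)

theorem stmt19_general (d : ℕ) (f : EuclideanSpace ℝ (Fin d) → ℝ)
    (hconv : StrictConvexOn ℝ Set.univ f) (hdiff : Differentiable ℝ f)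
    (Θ : Set (EuclideanSpace ℝ (Fin d))) (hΘconv : Convex ℝ Θ)
    (θhat : EuclideanSpace ℝ (Fin d)) (hθhatΘ : θhat ∈ Θ)
    (hθhatmin : ∀ θ ∈ Θ, f θhat ≤ f θ)
    (θ₀ : EuclideanSpace ℝ (Fin d)) (hθ₀ : θ₀ ∈ Θ)
    (A : Matrix (Fin d) (Fin d) ℝ) (hA : A.det ≠ 0)
    (f₀ : EuclideanSpace ℝ (Fin d) → ℝ)
    (hf₀ : ∀ x, f₀ x = f θ₀ + ⟪gradient f θ₀, x - θ₀⟫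
      + (1 / 2) * ‖Matrix.toEuclideanLin A x - Matrix.toEuclideanLin A θ₀‖ ^ 2)
    (θs : EuclideanSpace ℝ (Fin d)) (hθsΘ : θs ∈ Θ)
    (hθsmin : ∀ θ ∈ Θ, f₀ θs ≤ f₀ θ)
    (δ₀ : ℝ) (hδ₀ : δ₀ = ⟪gradient f θ₀, θ₀ - θs⟫) :
    ((θs = θ₀ ↔ θ₀ = θhat) ∧
      δ₀ / 2 ≤ f₀ θ₀ - f₀ θs ∧ f₀ θ₀ - f₀ θs ≤ δ₀ ∧
      f θ₀ - f θhat ≤ ⟪gradient f θ₀, θ₀ - θhat⟫ ∧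
      ⟪gradient f θ₀, θ₀ - θhat⟫ ≤
        max (2 * δ₀) (Real.sqrt (2 * δ₀) *
          ‖Matrix.toEuclideanLin A θhat - Matrix.toEuclideanLin A θ₀‖)) ∧
    (∀ c₀ : ℝ, 0 < c₀ → ContDiff ℝ 2 f →
      (∀ t ∈ Icc (0 : ℝ) 1,
        deriv (deriv (fun u : ℝ => f ((1 - u) • θ₀ + u • θs))) t ≤
          c₀ * ‖θ₀ - θs‖ ^ 2) →
      θ₀ ≠ θhat →
      ∃ t ∈ Icc (0 : ℝ) 1,
        (1 / 2) * min δ₀ (δ₀ ^ 2 / (c₀ * ‖θ₀ - θs‖ ^ 2)) ≤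
          f θ₀ - f ((1 - t) • θ₀ + t • θs)) := by
  set L := Matrix.toEuclideanLin A
  have hmodel : f₀ = quadraticModel (f θ₀) (gradient f θ₀) θ₀ L := funext hf₀
  have hmin : IsMinOn f₀ Θ θs := isMinOn_iff.mpr hθsmin
  rw [hmodel] at hmin ⊢
  have hfΘ : StrictConvexOn ℝ Θ f := hconv.subset (subset_univ Θ) hΘconv
  have hθhat : IsMinOn f Θ θhat := isMinOn_iff.mpr hθhatmin
  have hgap := quadraticModel_self_sub (c := f θ₀) (g := gradient f θ₀) (x₀ := θ₀) (L := L) θs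
  have hnorm := hmin.norm_sq_le_inner hΘconv hθsΘ hθ₀
  rw [← hδ₀] at hgap hnorm
  have hδ₀_nonneg : 0 ≤ δ₀ := (sq_nonneg _).trans hnorm
  refine ⟨⟨?_, by linarith, by linarith [sq_nonneg ‖L θs - L θ₀‖], ?_,
    hδ₀ ▸ inner_sub_le_max_of_isMinOn_quadraticModel hmin hΘconv hθ₀ hθhatΘ⟩, ?_⟩
  · rw [hmin.eq_iff_inner_nonneg hΘconv hθsΘ hθ₀ (Matrix.toEuclideanLin_injective hA),
      ← hfΘ.convexOn.isMinOn_iff_inner_gradient_nonneg hθ₀ (hdiff θ₀)]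
    exact ⟨fun h => hfΘ.eq_of_isMinOn h hθhat hθ₀ hθhatΘ, fun h => h ▸ hθhat⟩
  · have := hconv.convexOn.add_inner_gradient_le (mem_univ θ₀) (mem_univ θhat) (hdiff θ₀)
    rw [← neg_sub θ₀ θhat, inner_neg_right] at this
    linarith
  · intro c₀ hc₀ hf hbound _
    simp only [← AffineMap.lineMap_apply_module] at hbound ⊢
    obtain ⟨t, ht, hle⟩ :=
      exists_mem_Icc_half_min_le hδ₀_nonneg (by positivity : 0 ≤ c₀ * ‖θ₀ - θs‖ ^ 2)
    have htaylor := hf.apply_lineMap_le_of_deriv_deriv_le hbound ht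
    rw [← neg_sub θ₀ θs, inner_neg_right, ← hδ₀] at htaylor
    exact ⟨t, ht, by linarith⟩

/-- **Lemma (quadratic approximations in constrained convex minimization).**
Let `f` be strictly convex and differentiable on `ℝ^d`, `Θ` closed convex,
`θ̂` a minimizer of `f` over `Θ`, `θ₀ ∈ Θ`, `A` a nonsingular matrix, `f₀` the
quadratic approximation of `f` at `θ₀` with curvature `‖A·‖²`, `θ_*` the
minimizer of `f₀` over `Θ` and `δ₀ = ⟪∇f(θ₀), θ₀ − θ_*⟫`. Then
`θ_* = θ₀ ⇔ θ₀ = θ̂`; `δ₀/2 ≤ f₀(θ₀) − f₀(θ_*) ≤ δ₀`;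
`f(θ₀) − f(θ̂) ≤ ⟪∇f(θ₀), θ₀ − θ̂⟫ ≤ max(2δ₀, √(2δ₀)‖Aθ̂ − Aθ₀‖)`; and under a
second-order bound along the segment from `θ₀` to `θ_*`, a guaranteed descent
along that segment. -/
theorem stmt19 (d : ℕ) (f : EuclideanSpace ℝ (Fin d) → ℝ)
    (hconv : StrictConvexOn ℝ Set.univ f) (hdiff : Differentiable ℝ f)
    (Θ : Set (EuclideanSpace ℝ (Fin d))) (hclosed : IsClosed Θ) (hΘconv : Convex ℝ Θ)
    (θhat : EuclideanSpace ℝ (Fin d)) (hθhatΘ : θhat ∈ Θ)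
    (hθhatmin : ∀ θ ∈ Θ, f θhat ≤ f θ)
    (θ₀ : EuclideanSpace ℝ (Fin d)) (hθ₀ : θ₀ ∈ Θ)
    (A : Matrix (Fin d) (Fin d) ℝ) (hA : A.det ≠ 0)
    (f₀ : EuclideanSpace ℝ (Fin d) → ℝ)
    (hf₀ : ∀ x, f₀ x = f θ₀ + ⟪gradient f θ₀, x - θ₀⟫
      + (1 / 2) * ‖Matrix.toEuclideanLin A x - Matrix.toEuclideanLin A θ₀‖ ^ 2)
    (θs : EuclideanSpace ℝ (Fin d)) (hθsΘ : θs ∈ Θ)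
    (hθsmin : ∀ θ ∈ Θ, f₀ θs ≤ f₀ θ)
    (δ₀ : ℝ) (hδ₀ : δ₀ = ⟪gradient f θ₀, θ₀ - θs⟫) :
    ((θs = θ₀ ↔ θ₀ = θhat) ∧
      δ₀ / 2 ≤ f₀ θ₀ - f₀ θs ∧ f₀ θ₀ - f₀ θs ≤ δ₀ ∧
      f θ₀ - f θhat ≤ ⟪gradient f θ₀, θ₀ - θhat⟫ ∧
      ⟪gradient f θ₀, θ₀ - θhat⟫ ≤
        max (2 * δ₀) (Real.sqrt (2 * δ₀) *
          ‖Matrix.toEuclideanLin A θhat - Matrix.toEuclideanLin A θ₀‖)) ∧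
    (∀ c₀ : ℝ, 0 < c₀ → ContDiff ℝ 2 f →
      (∀ t ∈ Icc (0 : ℝ) 1,
        deriv (deriv (fun u : ℝ => f ((1 - u) • θ₀ + u • θs))) t ≤
          c₀ * ‖θ₀ - θs‖ ^ 2) →
      θ₀ ≠ θhat →
      ∃ t ∈ Icc (0 : ℝ) 1,
        (1 / 2) * min δ₀ (δ₀ ^ 2 / (c₀ * ‖θ₀ - θs‖ ^ 2)) ≤
          f θ₀ - f ((1 - t) • θ₀ + t • θs)) :=
  stmt19_general d f hconv hdiff Θ hΘconv θhat hθhatΘ hθhatmin θ₀ hθ₀ A hA f₀ hf₀ θs hθsΘ hθsmin δ₀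
    hδ₀
end
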